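/- arXiv:2110.08298 — 12 statements merged into one kernel-verified Lean document; each statement's English description precedes it below -/
import Mathlib

section
/- For any matrix A ∈ ℝ^{n×n}, the spectral abscissa of A is at most the spectral abscissa of its Metzler majorant: α(A) ≤ α(⌈A⌉_Mzr). -/
/-- Spectral abscissa: supremum of real parts of (complex) eigenvalues. -/
noncomputable def specAbs {n : ℕ} (A : Matrix (Fin n) (Fin n) ℝ) : ℝ :=
  sSup {r : ℝ | ∃ μ : ℂ, μ ∈ spectrum ℂ (A.map (algebraMap ℝ ℂ)) ∧ r = μ.re}

/-- Metzler majorant: keeps the diagonal, takes absolute values off the diagonal. -/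
def mzr {n : ℕ} (A : Matrix (Fin n) (Fin n) ℝ) : Matrix (Fin n) (Fin n) ℝ :=
  fun i j => if i = j then A i j else |A i j|

/-!
Shifting by a large real `c` makes the diagonal of `A + c` nonnegative, so `A + c` is dominated
entrywise in absolute value by `mzr A + c`; by Gelfand's formula the spectral radius of
`A + c` is then at most that of `mzr A + c`. Hence every eigenvalue `μ` of `A` satisfies
`Re μ + c ≤ |μ + c| ≤ |ν + c|` for some eigenvalue `ν` of `mzr A`, and
`|ν + c| ≤ Re ν + c + O(1/c)`. Letting `c → ∞` gives `Re μ ≤ α(mzr A)`.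
-/

open Filter Topology
open scoped ENNReal

attribute [local instance] Matrix.linftyOpSeminormedAddCommGroup Matrix.linftyOpNormedRing
  Matrix.linftyOpNormedAlgebra

theorem spectrum.spectralRadius_le_of_forall_nnnorm_pow_le {A : Type*} [NormedRing A]
    [NormedAlgebra ℂ A] [CompleteSpace A] {a b : A} (h : ∀ k : ℕ, ‖a ^ k‖₊ ≤ ‖b ^ k‖₊) :
    spectralRadius ℂ a ≤ spectralRadius ℂ b :=
  le_of_tendsto_of_tendsto' (pow_nnnorm_pow_one_div_tendsto_nhds_spectralRadius a)
    (pow_nnnorm_pow_one_div_tendsto_nhds_spectralRadius b) fun k =>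
      ENNReal.rpow_le_rpow (by exact_mod_cast h k) (by positivity)

theorem Complex.norm_add_ofReal_le {z : ℂ} {K c : ℝ} (hz : ‖z‖ ≤ K) (hKc : K < c) :
    ‖z + c‖ ≤ z.re + c + K ^ 2 / (2 * (c - K)) := by
  set δ := K ^ 2 / (2 * (c - K))
  have hδ : 2 * (c - K) * δ = K ^ 2 := mul_div_cancel₀ _ (by linarith)
  have hre : c - K ≤ z.re + c := by linarith [neg_le_of_abs_le ((abs_re_le_norm z).trans hz)]
  have him : z.im ^ 2 ≤ K ^ 2 := sq_le_sq.2 <| (abs_im_le_norm z).trans <| hz.trans (le_abs_self K)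
  have hδ0 : 0 ≤ δ := by positivity
  rw [norm_def, Real.sqrt_le_left (by linarith)]
  simp only [normSq_apply, add_re, ofReal_re, add_im, ofReal_im, add_zero]
  -- `(x + δ)² ≥ x² + 2 (c - K) δ = x² + K² ≥ x² + y²` with `x = z.re + c`, `y = z.im`
  nlinarith

namespace Matrix

variable {ι : Type*} [Fintype ι] [DecidableEq ι]

theorem norm_pow_apply_le_of_norm_apply_le {R : Type*} [NormedRing R] [NormOneClass R]
    {B : Matrix ι ι R} {C : Matrix ι ι ℝ} (h : ∀ i j, ‖B i j‖ ≤ C i j) (k : ℕ) (i j : ι) :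
    ‖(B ^ k) i j‖ ≤ (C ^ k) i j := by
  induction k generalizing j with
  | zero => by_cases hij : i = j <;> simp [hij]
  | succ k ih =>
    rw [pow_succ, pow_succ, mul_apply, mul_apply]
    refine (norm_sum_le _ _).trans (Finset.sum_le_sum fun l _ => ?_)
    exact (norm_mul_le _ _).trans
      (mul_le_mul (ih l) (h l j) (norm_nonneg _) ((norm_nonneg _).trans (ih l)))

theorem linfty_opNNNorm_le_of_norm_apply_le {m n α β : Type*} [Fintype m] [Fintype n]
    [SeminormedAddCommGroup α] [SeminormedAddCommGroup β] {B : Matrix m n α} {C : Matrix m n β}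
    (h : ∀ i j, ‖B i j‖ ≤ ‖C i j‖) : ‖B‖₊ ≤ ‖C‖₊ := by
  rw [linfty_opNNNorm_def, linfty_opNNNorm_def]
  exact Finset.sup_mono_fun fun i _ => Finset.sum_le_sum fun j _ => h i j

theorem spectralRadius_le_of_norm_apply_le {B : Matrix ι ι ℂ} {C : Matrix ι ι ℝ}
    (h : ∀ i j, ‖B i j‖ ≤ C i j) :
    spectralRadius ℂ B ≤ spectralRadius ℂ (C.map (algebraMap ℝ ℂ)) := by
  refine spectrum.spectralRadius_le_of_forall_nnnorm_pow_le fun k => ?_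
  refine linfty_opNNNorm_le_of_norm_apply_le fun i j => ?_
  have hk := norm_pow_apply_le_of_norm_apply_le h k i j
  have hk0 : 0 ≤ (C ^ k) i j := (norm_nonneg _).trans hk
  rwa [← RingHom.mapMatrix_apply, ← map_pow, RingHom.mapMatrix_apply, map_apply,
    Complex.coe_algebraMap, Complex.norm_real, Real.norm_of_nonneg hk0]

theorem exists_norm_le_of_norm_apply_le [Nonempty ι] {B : Matrix ι ι ℂ} {C : Matrix ι ι ℝ}
    (h : ∀ i j, ‖B i j‖ ≤ C i j) {z : ℂ} (hz : z ∈ spectrum ℂ B) :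
    ∃ w ∈ spectrum ℂ (C.map (algebraMap ℝ ℂ)), ‖z‖ ≤ ‖w‖ := by
  obtain ⟨w, hw, hρ⟩ := spectrum.exists_nnnorm_eq_spectralRadius (C.map (algebraMap ℝ ℂ))
  refine ⟨w, hw, ?_⟩
  have : (‖z‖₊ : ℝ≥0∞) ≤ ‖w‖₊ :=
    hρ ▸ (le_iSup₂ (α := ℝ≥0∞) z hz).trans (spectralRadius_le_of_norm_apply_le h)
  exact_mod_cast this

theorem map_algebraMap_add (c : ℝ) (X : Matrix ι ι ℝ) :
    (algebraMap ℝ (Matrix ι ι ℝ) c + X).map (algebraMap ℝ ℂ) =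
      algebraMap ℂ (Matrix ι ι ℂ) c + X.map (algebraMap ℝ ℂ) := by
  ext i j
  by_cases hij : i = j <;> simp [algebraMap_matrix_apply, hij]

end Matrix

open Matrix

theorem re_le_specAbs {n : ℕ} {A : Matrix (Fin n) (Fin n) ℝ} {μ : ℂ}
    (hμ : μ ∈ spectrum ℂ (A.map (algebraMap ℝ ℂ))) : μ.re ≤ specAbs A := by
  have hbdd := ((finite_spectrum (A.map (algebraMap ℝ ℂ))).image Complex.re).bddAbove
  refine le_csSup (hbdd.mono ?_) ⟨μ, hμ, rfl⟩
  rintro _ ⟨ν, hν, rfl⟩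
  exact ⟨ν, hν, rfl⟩

theorem abs_algebraMap_add_apply_le_mzr {n : ℕ} (A : Matrix (Fin n) (Fin n) ℝ) {c : ℝ}
    (hc : ∀ i, -A i i ≤ c) (i j : Fin n) :
    |(algebraMap ℝ (Matrix (Fin n) (Fin n) ℝ) c + A) i j| ≤ (algebraMap ℝ _ c + mzr A) i j := by
  rcases eq_or_ne i j with rfl | hij
  · simp only [Matrix.add_apply, algebraMap_matrix_apply, mzr, if_true, Algebra.algebraMap_self,
      RingHom.id_apply]
    exact (abs_of_nonneg (by linarith [hc i])).le
  · simp [algebraMap_matrix_apply, mzr, hij]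

theorem re_le_specAbs_mzr_add {n : ℕ} [Nonempty (Fin n)] (A : Matrix (Fin n) (Fin n) ℝ) {μ : ℂ}
    (hμ : μ ∈ spectrum ℂ (A.map (algebraMap ℝ ℂ))) {K c : ℝ}
    (hK : ∀ ν ∈ spectrum ℂ ((mzr A).map (algebraMap ℝ ℂ)), ‖ν‖ ≤ K) (hKc : K < c)
    (hdiag : ∀ i, -A i i ≤ c) :
    μ.re ≤ specAbs (mzr A) + K ^ 2 / (2 * (c - K)) := by
  have hshift : μ + c ∈ spectrum ℂ ((algebraMap ℝ _ c + A).map (algebraMap ℝ ℂ)) := by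
    rw [map_algebraMap_add]
    exact spectrum.add_mem_add_iff.2 hμ
  obtain ⟨w, hw, hμw⟩ := exists_norm_le_of_norm_apply_le
    (fun i j => (Complex.norm_real _).trans_le (abs_algebraMap_add_apply_le_mzr A hdiag i j)) hshift
  rw [map_algebraMap_add] at hw
  have hν : w - c ∈ spectrum ℂ ((mzr A).map (algebraMap ℝ ℂ)) :=
    spectrum.add_mem_add_iff.1 (by rwa [sub_add_cancel])
  calc μ.re = (μ + c).re - c := by simp
    _ ≤ ‖μ + c‖ - c := by gcongr; exact Complex.re_le_norm _
    _ ≤ ‖(w - c) + c‖ - c := by rwa [sub_add_cancel, sub_le_sub_iff_right]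
    _ ≤ (w - c).re + K ^ 2 / (2 * (c - K)) := by
      linarith [Complex.norm_add_ofReal_le (hK _ hν) hKc]
    _ ≤ specAbs (mzr A) + K ^ 2 / (2 * (c - K)) := by gcongr; exact re_le_specAbs hν

theorem specAbs_le_specAbs_mzr {n : ℕ} (A : Matrix (Fin n) (Fin n) ℝ) :
    specAbs A ≤ specAbs (mzr A) := by
  rcases isEmpty_or_nonempty (Fin n) with _ | _
  · rw [Subsingleton.elim (mzr A) A]
  set K := ‖(mzr A).map (algebraMap ℝ ℂ)‖
  obtain ⟨μ₀, hμ₀⟩ := spectrum.nonempty (A.map (algebraMap ℝ ℂ))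
  refine csSup_le ⟨μ₀.re, μ₀, hμ₀, rfl⟩ ?_
  rintro _ ⟨μ, hμ, rfl⟩
  have hlim : Tendsto (fun c : ℝ => specAbs (mzr A) + K ^ 2 / (2 * (c - K))) atTop
      (𝓝 (specAbs (mzr A))) := by
    simpa [sub_eq_add_neg] using tendsto_const_nhds.add (tendsto_const_nhds.div_atTop
      ((tendsto_atTop_add_const_right _ (-K) tendsto_id).const_mul_atTop two_pos))
  refine ge_of_tendsto hlim ?_
  filter_upwards [eventually_gt_atTop K, eventually_all.2 fun i => eventually_ge_atTop (-A i i)]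
    with c hKc hdiag
  exact re_le_specAbs_mzr_add A hμ (fun ν hν => spectrum.norm_le_norm_of_mem hν) hKc hdiag
end

section
/- For any matrix A ∈ ℝ^{n×n}, any positive vector η ∈ ℝ^n_{>0}, and any p ∈ [1,∞], the diagonally-weighted logarithmic norm satisfies μ_{p,[η]}(A) ≤ μ_{p,[η]}(⌈A⌉_Mzr), with equality when p ∈ {1,∞}. -/
open Finset

/-- Diagonally weighted ℓ_p norm, `p ∈ [1,∞]`: `‖x‖_{p,[η]} = ‖[η]x‖_p`. -/
noncomputable def wnormP {n : ℕ} (p : ENNReal) (η : Fin n → ℝ) (x : Fin n → ℝ) : ℝ :=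
  if p = ⊤ then ⨆ i, η i * |x i|
  else (∑ i, (η i * |x i|) ^ p.toReal) ^ (1 / p.toReal)

/-- Operator norm induced by the weighted ℓ_p norm. -/
noncomputable def opNormP {n : ℕ} (p : ENNReal) (η : Fin n → ℝ)
    (A : Matrix (Fin n) (Fin n) ℝ) : ℝ :=
  sSup {c : ℝ | ∃ x : Fin n → ℝ, wnormP p η x = 1 ∧ c = wnormP p η (A.mulVec x)}

/-!
For small `h > 0` the diagonal of `1 + h • A` is nonnegative, so `1 + h • ⌈A⌉_Mzr` is the
entrywise absolute value `|1 + h • A|`. The weighted ℓ_p norm is monotone in the absolute values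
of the entries and `|B x| ≤ |B| |x|` entrywise, so `‖B‖ ≤ ‖|B|‖`; this compares the difference
quotients, hence their limits. For `p = ∞` and `p = 1` the reverse inequality holds as well:
`|B| |x|` is matched in any single row by `B y` for a sign-flipped copy `y` of `|x|`, and
`‖|B| x‖₁` is a convex combination of the weighted column sums of `|B|`, each of which is the
norm of `B` applied to a scaled basis vector.
-/

open Filter Topology Matrix

section WeightedOpNorm

variable {n : ℕ} {p : ENNReal} {η : Fin n → ℝ}

theorem wnormP_nonneg (hη : ∀ i, 0 ≤ η i) (x : Fin n → ℝ) : 0 ≤ wnormP p η x := by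
  unfold wnormP
  split
  · exact Real.iSup_nonneg fun i => mul_nonneg (hη i) (abs_nonneg _)
  · exact Real.rpow_nonneg
      (sum_nonneg fun i _ => Real.rpow_nonneg (mul_nonneg (hη i) (abs_nonneg _)) _) _

theorem wnormP_mono (hη : ∀ i, 0 ≤ η i) {x y : Fin n → ℝ} (h : ∀ i, |x i| ≤ |y i|) :
    wnormP p η x ≤ wnormP p η y := by
  have hterm i : η i * |x i| ≤ η i * |y i| := mul_le_mul_of_nonneg_left (h i) (hη i)
  unfold wnormP
  split
  · exact ciSup_mono (Set.finite_range _).bddAbove hterm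
  · refine Real.rpow_le_rpow (sum_nonneg fun i _ => ?_) (sum_le_sum fun i _ => ?_) (by positivity)
    · exact Real.rpow_nonneg (mul_nonneg (hη i) (abs_nonneg _)) _
    · exact Real.rpow_le_rpow (mul_nonneg (hη i) (abs_nonneg _)) (hterm i) ENNReal.toReal_nonneg

theorem wnormP_congr_abs (hη : ∀ i, 0 ≤ η i) {x y : Fin n → ℝ} (h : ∀ i, |x i| = |y i|) :
    wnormP p η x = wnormP p η y :=
  (wnormP_mono hη fun i => (h i).le).antisymm (wnormP_mono hη fun i => (h i).ge)

theorem mul_abs_le_wnormP (hp : p ≠ 0) (hη : ∀ i, 0 ≤ η i) (x : Fin n → ℝ) (j : Fin n) :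
    η j * |x j| ≤ wnormP p η x := by
  have hj : 0 ≤ η j * |x j| := mul_nonneg (hη j) (abs_nonneg _)
  unfold wnormP
  split
  · exact le_ciSup (f := fun i => η i * |x i|) (Set.finite_range _).bddAbove j
  · rename_i hpt
    have hr : p.toReal ≠ 0 := (ENNReal.toReal_pos hp hpt).ne'
    calc η j * |x j| = ((η j * |x j|) ^ p.toReal) ^ (1 / p.toReal) := by
          rw [one_div, Real.rpow_rpow_inv hj hr]
      _ ≤ _ := by
          refine Real.rpow_le_rpow (Real.rpow_nonneg hj _) ?_ (by positivity)
          exact single_le_sum (f := fun i => (η i * |x i|) ^ p.toReal)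
            (fun i _ => Real.rpow_nonneg (mul_nonneg (hη i) (abs_nonneg _)) _) (mem_univ j)

theorem wnormP_one (x : Fin n → ℝ) : wnormP 1 η x = ∑ i, η i * |x i| := by
  simp [wnormP]

theorem wnormP_one_single (hη : ∀ i, 0 < η i) (j : Fin n) :
    wnormP 1 η (Pi.single j (η j)⁻¹) = 1 := by
  rw [wnormP_one, sum_eq_single j (fun i _ hij => by simp [hij]) (by simp)]
  simp [abs_of_pos (hη j), (hη j).ne']

theorem opNormP_nonneg (hη : ∀ i, 0 ≤ η i) (B : Matrix (Fin n) (Fin n) ℝ) :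
    0 ≤ opNormP p η B :=
  Real.sSup_nonneg <| by rintro _ ⟨x, -, rfl⟩; exact wnormP_nonneg hη _

/-- The bound `0 ≤ c` is needed because `sSup ∅ = 0` (the case `n = 0`). -/
theorem opNormP_le_of_forall {B : Matrix (Fin n) (Fin n) ℝ} {c : ℝ} (hc : 0 ≤ c)
    (h : ∀ x, wnormP p η x = 1 → wnormP p η (B *ᵥ x) ≤ c) : opNormP p η B ≤ c :=
  Real.sSup_le (by rintro _ ⟨x, hx, rfl⟩; exact h x hx) hc

theorem abs_mulVec_le (B : Matrix (Fin n) (Fin n) ℝ) (x : Fin n → ℝ) (i : Fin n) :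
    |(B *ᵥ x) i| ≤ (B.map abs *ᵥ fun j => |x j|) i := by
  simp only [mulVec, dotProduct, map_apply]
  exact (abs_sum_le_sum_abs _ _).trans_eq (sum_congr rfl fun j _ => abs_mul _ _)

theorem wnormP_mulVec_le_opNormP (hp : p ≠ 0) (hη : ∀ i, 0 < η i)
    (B : Matrix (Fin n) (Fin n) ℝ) {x : Fin n → ℝ} (hx : wnormP p η x = 1) :
    wnormP p η (B *ᵥ x) ≤ opNormP p η B := by
  refine le_csSup ⟨wnormP p η fun i => ∑ j, |B i j| * (η j)⁻¹, ?_⟩ ⟨x, hx, rfl⟩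
  rintro _ ⟨y, hy, rfl⟩
  have hyj j : |y j| ≤ (η j)⁻¹ := by
    rw [← one_div, le_div_iff₀' (hη j), ← hy]
    exact mul_abs_le_wnormP hp (fun i => (hη i).le) y j
  refine wnormP_mono (fun i => (hη i).le) fun i => (abs_mulVec_le B y i).trans ?_
  simp only [mulVec, dotProduct, map_apply]
  refine le_abs.2 (Or.inl (sum_le_sum fun j _ => ?_))
  exact mul_le_mul_of_nonneg_left (hyj j) (abs_nonneg _)

theorem opNormP_le_opNormP_map_abs (hp : p ≠ 0) (hη : ∀ i, 0 < η i)
    (B : Matrix (Fin n) (Fin n) ℝ) : opNormP p η B ≤ opNormP p η (B.map abs) := by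
  have hη' i : 0 ≤ η i := (hη i).le
  refine opNormP_le_of_forall (opNormP_nonneg hη' _) fun x hx => ?_
  have habs : wnormP p η (fun j => |x j|) = 1 := by
    rw [← hx]; exact wnormP_congr_abs hη' fun j => abs_abs (x j)
  calc wnormP p η (B *ᵥ x) ≤ wnormP p η (B.map abs *ᵥ fun j => |x j|) :=
        wnormP_mono hη' fun i => (abs_mulVec_le B x i).trans (le_abs_self _)
    _ ≤ opNormP p η (B.map abs) := wnormP_mulVec_le_opNormP hp hη _ habs

theorem exists_abs_eq_and_mulVec_apply_eq (B : Matrix (Fin n) (Fin n) ℝ) (x : Fin n → ℝ)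
    (i : Fin n) : ∃ y : Fin n → ℝ, (∀ j, |y j| = |x j|) ∧
      (B *ᵥ y) i = (B.map abs *ᵥ fun j => |x j|) i := by
  refine ⟨fun j => if 0 ≤ B i j then |x j| else -|x j|,
    fun j => by beta_reduce; split_ifs <;> simp, ?_⟩
  simp only [mulVec, dotProduct, map_apply]
  refine sum_congr rfl fun j _ => ?_
  split_ifs with h
  · rw [abs_of_nonneg h]
  · rw [abs_of_neg (not_le.1 h)]; ring

theorem map_abs_map_abs (B : Matrix (Fin n) (Fin n) ℝ) : (B.map abs).map abs = B.map abs := by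
  ext; simp

theorem opNormP_top_map_abs_le (hη : ∀ i, 0 < η i) (B : Matrix (Fin n) (Fin n) ℝ) :
    opNormP ⊤ η (B.map abs) ≤ opNormP ⊤ η B := by
  have hη' i : 0 ≤ η i := (hη i).le
  refine opNormP_le_of_forall (opNormP_nonneg hη' B) fun x hx => ?_
  rw [wnormP, if_pos rfl]
  refine Real.iSup_le (fun i => ?_) (opNormP_nonneg hη' B)
  obtain ⟨y, hyx, hBy⟩ := exists_abs_eq_and_mulVec_apply_eq B x i
  have hy : wnormP ⊤ η y = 1 := (wnormP_congr_abs hη' hyx).trans hx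
  calc η i * |(B.map abs *ᵥ x) i| ≤ η i * |(B *ᵥ y) i| := by
        refine mul_le_mul_of_nonneg_left ?_ (hη' i)
        rw [hBy]
        simpa only [map_abs_map_abs] using (abs_mulVec_le (B.map abs) x i).trans (le_abs_self _)
    _ ≤ wnormP ⊤ η (B *ᵥ y) := mul_abs_le_wnormP ENNReal.top_ne_zero hη' _ i
    _ ≤ opNormP ⊤ η B := wnormP_mulVec_le_opNormP ENNReal.top_ne_zero hη B hy

theorem opNormP_one_map_abs_le (hη : ∀ i, 0 < η i) (B : Matrix (Fin n) (Fin n) ℝ) :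
    opNormP 1 η (B.map abs) ≤ opNormP 1 η B := by
  have hη' i : 0 ≤ η i := (hη i).le
  refine opNormP_le_of_forall (opNormP_nonneg hη' B) fun x hx => ?_
  have hcol j : ∑ i, η i * |B i j| * (η j)⁻¹ ≤ opNormP 1 η B := by
    have := wnormP_mulVec_le_opNormP one_ne_zero hη B (wnormP_one_single hη j)
    rw [wnormP_one, mulVec_single] at this
    simpa [abs_mul, abs_of_pos (hη j), mul_assoc] using this
  rw [wnormP_one] at hx ⊢
  calc ∑ i, η i * |(B.map abs *ᵥ x) i|
      ≤ ∑ i, η i * ∑ j, |B i j| * |x j| := sum_le_sum fun i _ => by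
        refine mul_le_mul_of_nonneg_left ?_ (hη' i)
        simpa [map_abs_map_abs, mulVec, dotProduct] using abs_mulVec_le (B.map abs) x i
    _ = ∑ j, (∑ i, η i * |B i j| * (η j)⁻¹) * (η j * |x j|) := by
        simp only [mul_sum, sum_mul]
        rw [sum_comm]
        refine sum_congr rfl fun j _ => sum_congr rfl fun i _ => ?_
        field_simp [(hη j).ne']
    _ ≤ ∑ j, opNormP 1 η B * (η j * |x j|) :=
        sum_le_sum fun j _ =>
          mul_le_mul_of_nonneg_right (hcol j) (mul_nonneg (hη' j) (abs_nonneg _))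
    _ = opNormP 1 η B := by rw [← mul_sum, hx, mul_one]

theorem map_abs_one_add_smul_eq_mzr (A : Matrix (Fin n) (Fin n) ℝ) {h : ℝ}
    (hh : 0 ≤ h) (hdiag : ∀ i, 0 ≤ 1 + h * A i i) : (1 + h • A).map abs = 1 + h • mzr A := by
  ext i j
  rcases eq_or_ne i j with rfl | hij
  · simpa [mzr] using hdiag i
  · simp [mzr, hij, one_apply_ne hij, abs_mul, abs_of_nonneg hh]

theorem eventually_map_abs_one_add_smul_eq_mzr (A : Matrix (Fin n) (Fin n) ℝ) :
    ∀ᶠ h in 𝓝[>] (0 : ℝ), 0 < h ∧ (1 + h • A).map abs = 1 + h • mzr A := by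
  have hdiag : ∀ᶠ h in 𝓝 (0 : ℝ), ∀ i, 0 < 1 + h * A i i := by
    refine eventually_all.2 fun i => ?_
    have hcont : Continuous fun h : ℝ => 1 + h * A i i := by fun_prop
    exact (hcont.tendsto 0).eventually (lt_mem_nhds (by norm_num))
  filter_upwards [self_mem_nhdsWithin, nhdsWithin_le_nhds hdiag] with h hpos hh
  exact ⟨hpos, map_abs_one_add_smul_eq_mzr A hpos.le fun i => (hh i).le⟩

end WeightedOpNorm

/-- If `μ_{p,[η]}(A)` and `μ_{p,[η]}(⌈A⌉_Mzr)` are the logarithmic norms (one-sided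
limits `a` and `b` below), then `μ_{p,[η]}(A) ≤ μ_{p,[η]}(⌈A⌉_Mzr)`, with
equality whenever `p ∈ {1, ∞}`. -/
theorem mu_le_mu_mzr {n : ℕ} (p : ENNReal) (hp : 1 ≤ p) (η : Fin n → ℝ)
    (hη : ∀ i, 0 < η i) (A : Matrix (Fin n) (Fin n) ℝ) (a b : ℝ)
    (ha : Filter.Tendsto (fun h : ℝ => (opNormP p η (1 + h • A) - 1) / h)
      (nhdsWithin 0 (Set.Ioi 0)) (nhds a))
    (hb : Filter.Tendsto (fun h : ℝ => (opNormP p η (1 + h • mzr A) - 1) / h)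
      (nhdsWithin 0 (Set.Ioi 0)) (nhds b)) :
    a ≤ b ∧ ((p = 1 ∨ p = ⊤) → a = b) := by
  have hp0 : p ≠ 0 := (zero_lt_one.trans_le hp).ne'
  have hev := eventually_map_abs_one_add_smul_eq_mzr A
  refine ⟨le_of_tendsto_of_tendsto ha hb ?_, fun hp1 => tendsto_nhds_unique (ha.congr' ?_) hb⟩
  · filter_upwards [hev] with h ⟨hpos, hmap⟩
    rw [← hmap]
    gcongr
    exact opNormP_le_opNormP_map_abs hp0 hη _
  · filter_upwards [hev] with h ⟨_, hmap⟩
    rw [← hmap]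
    refine congrArg (fun c => (c - 1) / h) (le_antisymm (opNormP_le_opNormP_map_abs hp0 hη _) ?_)
    rcases hp1 with rfl | rfl
    · exact opNormP_one_map_abs_le hη _
    · exact opNormP_top_map_abs_le hη _
end

section
/- For a fixed matrix A ∈ ℝ^{n×n}, the map η ↦ μ_{1,[η]}(A) from ℝ^n_{>0} to ℝ is quasiconvex; specifically, for each b ∈ ℝ, the sublevel set {η ∈ ℝ^n_{>0} : μ_{1,[η]}(A) ≤ b} is convex (the positive part of a polyhedral cone). -/
open Finset

/-- Weighted ℓ¹ logarithmic norm (explicit formula). -/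
noncomputable def mu1 {n : ℕ} (η : Fin n → ℝ) (A : Matrix (Fin n) (Fin n) ℝ) : ℝ :=
  ⨆ i, (A i i + ∑ j ∈ univ.erase i, (η j / η i) * |A j i|)

/-- The map `η ↦ μ_{1,[η]}(A)` is quasiconvex on the positive orthant:
every sublevel set is convex. -/
theorem mu1_sublevel_convex {n : ℕ} (A : Matrix (Fin n) (Fin n) ℝ) (b : ℝ) :
    Convex ℝ {η : Fin n → ℝ | (∀ i, 0 < η i) ∧ mu1 η A ≤ b} := by
  have key : ∀ (η : Fin n → ℝ), (∀ i, 0 < η i) → ∀ i : Fin n,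
      (A i i + ∑ j ∈ univ.erase i, (η j / η i) * |A j i| ≤ b ↔
        ∑ j ∈ univ.erase i, η j * |A j i| ≤ (b - A i i) * η i) := by
    intro η hη i
    have hi := hη i
    have hsum : ∑ j ∈ univ.erase i, (η j / η i) * |A j i|
        = (∑ j ∈ univ.erase i, η j * |A j i|) / η i := by
      rw [Finset.sum_div]
      exact Finset.sum_congr rfl fun j _ => div_mul_eq_mul_div _ _ _
    rw [hsum, ← le_sub_iff_add_le', div_le_iff₀ hi]
  intro x hx y hy a c ha hc hac
  have hz : ∀ i, 0 < a * x i + c * y i := by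
    intro i
    rcases ha.lt_or_eq with h | h
    · exact add_pos_of_pos_of_nonneg (mul_pos h (hx.1 i)) (mul_nonneg hc (hy.1 i).le)
    · subst h
      have hc1 : c = 1 := by linarith
      simpa [hc1] using hy.1 i
  have hzfun : ∀ i, (a • x + c • y) i = a * x i + c * y i := by
    intro i; simp [smul_eq_mul]
  constructor
  · intro i; rw [hzfun i]; exact hz i
  · rcases isEmpty_or_nonempty (Fin n) with hE | hN
    · have h0 : mu1 x A = 0 := Real.iSup_of_isEmpty _
      have : mu1 (a • x + c • y) A = 0 := Real.iSup_of_isEmpty _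
      rw [this]
      exact h0 ▸ hx.2
    · have bdd : ∀ (η : Fin n → ℝ),
          BddAbove (Set.range fun i => A i i + ∑ j ∈ univ.erase i, (η j / η i) * |A j i|) :=
        fun η => Set.Finite.bddAbove (Set.finite_range _)
      have hx2 : ∀ i, ∑ j ∈ univ.erase i, x j * |A j i| ≤ (b - A i i) * x i :=
        fun i => (key x hx.1 i).mp ((le_ciSup (bdd x) i).trans hx.2)
      have hy2 : ∀ i, ∑ j ∈ univ.erase i, y j * |A j i| ≤ (b - A i i) * y i :=
        fun i => (key y hy.1 i).mp ((le_ciSup (bdd y) i).trans hy.2)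
      refine ciSup_le fun i => ?_
      have hz' : ∀ j, (a • x + c • y) j = a * x j + c * y j := hzfun
      have hpos : ∀ j, 0 < (a • x + c • y) j := fun j => by rw [hz' j]; exact hz j
      rw [key _ hpos i]
      have hsplit : ∑ j ∈ univ.erase i, (a • x + c • y) j * |A j i|
          = a * (∑ j ∈ univ.erase i, x j * |A j i|)
            + c * (∑ j ∈ univ.erase i, y j * |A j i|) := by
        rw [Finset.mul_sum, Finset.mul_sum, ← Finset.sum_add_distrib]
        exact Finset.sum_congr rfl fun j _ => by rw [hz' j]; ring
      rw [hsplit, hz' i]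
      have h1 := mul_le_mul_of_nonneg_left (hx2 i) ha
      have h2 := mul_le_mul_of_nonneg_left (hy2 i) hc
      nlinarith [h1, h2]
end

section
/- If A ∈ ℝ^{n×n} satisfies α(⌈A⌉_Mzr) < 0 (A is M-Hurwitz), then A is Lyapunov diagonally stable: there exists η ∈ ℝ^n_{>0} such that [η]A + A^T[η] is negative definite. -/
/-!
A Metzler matrix `M` without eigenvalues in `[0, ∞)` admits `ξ > 0` with `M ξ < 0`. Indeed, with
`N = M + s • 1 ≥ 0` the resolvent `(1 - t • N)⁻¹` exists for `t ∈ [0, s⁻¹]`, and it stays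
entrywise nonnegative by continuous induction in `t`: near a point where it is nonnegative it is a
Neumann series of nonnegative matrices times its value there. At `t = s⁻¹` it equals `(-s⁻¹ • M)⁻¹`,
and `ξ = (-M)⁻¹ 1` works.

Applied to `M = ⌈A⌉_Mzr` and to `Mᵀ` this gives `ξ, ζ > 0`. For `η = ζ / ξ` the symmetric Metzler
matrix `S = [η] M + Mᵀ [η]` satisfies `S ξ = [η] M ξ + Mᵀ ζ < 0`, which forces `xᵀ S x < 0` for
`x ≠ 0`; and `xᵀ ([η] A + Aᵀ [η]) x ≤ |x|ᵀ S |x|` because `S` dominates the Metzler majorant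
of `[η] A + Aᵀ [η]` entrywise.
-/

open Matrix

open Filter Topology Set

namespace Matrix

variable {n : Type*}

def IsMetzler (M : Matrix n n ℝ) : Prop := ∀ i j, i ≠ j → 0 ≤ M i j

lemma IsMetzler.transpose {M : Matrix n n ℝ} (hM : M.IsMetzler) : Mᵀ.IsMetzler :=
  fun i j hij => hM j i hij.symm

variable [Fintype n]

lemma mul_apply_nonneg {P Q : Matrix n n ℝ} (hP : ∀ i j, 0 ≤ P i j) (hQ : ∀ i j, 0 ≤ Q i j)
    (i j : n) : 0 ≤ (P * Q) i j :=
  Finset.sum_nonneg fun l _ => mul_nonneg (hP i l) (hQ l j)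

lemma spectrum_transpose {K : Type*} [Field K] [DecidableEq n] (M : Matrix n n K) :
    spectrum K Mᵀ = spectrum K M := by
  ext r
  rw [mem_spectrum_iff_isRoot_charpoly, mem_spectrum_iff_isRoot_charpoly, charpoly_transpose]

lemma one_sub_smul_eq_mul [DecidableEq n] {N : Matrix n n ℝ} {a : ℝ} (ha : IsUnit (1 - a • N))
    (b : ℝ) :
    1 - b • N = (1 - a • N) * (1 - (b - a) • ((1 - a • N)⁻¹ * N)) := by
  rw [mul_sub, mul_one, mul_smul_comm, ← mul_assoc,
    mul_nonsing_inv _ ((isUnit_iff_isUnit_det _).1 ha), one_mul, sub_smul]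
  abel

section LinftyOpNorm

variable [DecidableEq n]

attribute [local instance] Matrix.linftyOpNormedRing Matrix.linftyOpNormedAlgebra

lemma inv_one_sub_apply_nonneg {X : Matrix n n ℝ} (hX : ∀ i j, 0 ≤ X i j) (hX1 : ‖X‖ < 1)
    (i j : n) : 0 ≤ (1 - X)⁻¹ i j := by
  have hsum := Pi.hasSum.1 (Pi.hasSum.1 (hasSum_geom_series_inverse X hX1) i) j
  rw [← nonsing_inv_eq_ringInverse] at hsum
  exact hsum.nonneg fun k => pow_apply_nonneg hX k i j

lemma inv_one_sub_smul_apply_nonneg {N : Matrix n n ℝ} (hN : ∀ i j, 0 ≤ N i j) {T : ℝ}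
    (hT : 0 ≤ T) (hunit : ∀ t ∈ Icc 0 T, IsUnit (1 - t • N)) (i j : n) :
    0 ≤ (1 - T • N)⁻¹ i j := by
  set S : Set ℝ := {t | ∀ i j, 0 ≤ (1 - t • N)⁻¹ i j}
  suffices Icc 0 T ⊆ S from this ⟨hT, le_rfl⟩ i j
  refine IsClosed.Icc_subset_of_forall_mem_nhdsWithin ?_
    (fun i j => by by_cases h : i = j <;> simp [h]) ?_
  · have hcont : ContinuousOn (fun t : ℝ => (1 - t • N)⁻¹) (Icc 0 T) := by
      intro t ht
      refine ((continuousAt_matrix_inv _ ?_).comp (by fun_prop)).continuousWithinAt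
      exact NormedRing.inverse_continuousAt ((isUnit_iff_isUnit_det _).1 (hunit t ht)).unit
    have hclosed : IsClosed {P : Matrix n n ℝ | ∀ i j, 0 ≤ P i j} := by
      simp only [Set.ofPred_forall]
      exact isClosed_iInter fun i => isClosed_iInter fun j =>
        isClosed_le continuous_const ((continuous_apply j).comp (continuous_apply i))
    rw [inter_comm]
    exact hcont.preimage_isClosed_of_isClosed isClosed_Icc hclosed
  · rintro t₀ ⟨hR, ht₀, ht₀T⟩
    set R := (1 - t₀ • N)⁻¹
    have hsmall : ∀ᶠ t in 𝓝 t₀, ‖(t - t₀) • (R * N)‖ < 1 :=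
      Tendsto.eventually_lt_const zero_lt_one <| by
        simpa using (by fun_prop : Continuous fun t : ℝ => ‖(t - t₀) • (R * N)‖).tendsto t₀
    filter_upwards [nhdsWithin_le_nhds hsmall, self_mem_nhdsWithin] with t ht hgt i j
    rw [one_sub_smul_eq_mul (hunit t₀ ⟨ht₀, ht₀T.le⟩) t, mul_inv_rev]
    refine mul_apply_nonneg (inv_one_sub_apply_nonneg (fun i j => ?_) ht) hR i j
    rw [smul_apply, smul_eq_mul]
    exact mul_nonneg (sub_nonneg.2 (le_of_lt hgt)) (mul_apply_nonneg hR hN i j)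

end LinftyOpNorm

lemma IsMetzler.exists_add_smul_one_nonneg [DecidableEq n] {M : Matrix n n ℝ}
    (hM : M.IsMetzler) : ∃ s : ℝ, 0 < s ∧ ∀ i j, 0 ≤ (M + s • 1) i j := by
  refine ⟨1 + ∑ i, |M i i|, by positivity, fun i j => ?_⟩
  rcases eq_or_ne i j with rfl | hij
  · have := Finset.single_le_sum (fun l _ => abs_nonneg (M l l)) (Finset.mem_univ i)
    simp only [add_apply, smul_apply, one_apply_eq, smul_eq_mul, mul_one]
    linarith [neg_le_abs (M i i)]
  · simpa [one_apply_ne hij] using hM i j hij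

lemma IsMetzler.inv_neg_apply_nonneg [DecidableEq n] {M : Matrix n n ℝ} (hM : M.IsMetzler)
    (hspec : ∀ r : ℝ, 0 ≤ r → r ∉ spectrum ℝ M) (i j : n) : 0 ≤ (-M)⁻¹ i j := by
  obtain ⟨s, hs, hN⟩ := hM.exists_add_smul_one_nonneg
  set N := M + s • 1
  have hunit : ∀ t ∈ Icc 0 s⁻¹, IsUnit (1 - t • N) := by
    rintro t ⟨ht, htT⟩
    rcases ht.eq_or_lt with rfl | ht
    · simp
    have hr : 0 ≤ t⁻¹ - s := sub_nonneg.2 ((le_inv_comm₀ ht hs).1 htT)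
    have hfactor : 1 - t • N = algebraMap ℝ _ t * (algebraMap ℝ _ (t⁻¹ - s) - M) := by
      rw [Algebra.algebraMap_eq_smul_one, Algebra.algebraMap_eq_smul_one, smul_one_mul, smul_sub,
        smul_smul, mul_sub, mul_inv_cancel₀ ht.ne']
      module
    rw [hfactor]
    exact ((isUnit_iff_ne_zero.2 ht.ne').map _).mul (spectrum.notMem_iff.1 (hspec _ hr))
  have hend : 1 - s⁻¹ • N = -(s⁻¹ • M) := by
    simp only [N, smul_add, smul_smul, inv_mul_cancel₀ hs.ne', one_smul]
    abel
  have hinv : (-M)⁻¹ = s⁻¹ • (1 - s⁻¹ • N)⁻¹ := by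
    have hdet := (isUnit_iff_isUnit_det _).1 (hunit s⁻¹ ⟨by positivity, le_rfl⟩)
    refine inv_eq_left_inv ?_
    rw [smul_mul, show -M = s • (1 - s⁻¹ • N) by rw [hend, smul_neg, smul_smul,
      mul_inv_cancel₀ hs.ne', one_smul], mul_smul_comm, smul_smul, inv_mul_cancel₀ hs.ne',
      one_smul, nonsing_inv_mul _ hdet]
  rw [hinv, smul_apply, smul_eq_mul]
  exact mul_nonneg (inv_nonneg.2 hs.le) (inv_one_sub_smul_apply_nonneg hN (by positivity) hunit i j)

theorem IsMetzler.exists_pos_mulVec_neg [DecidableEq n] {M : Matrix n n ℝ} (hM : M.IsMetzler)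
    (hspec : ∀ r : ℝ, 0 ≤ r → r ∉ spectrum ℝ M) :
    ∃ ξ : n → ℝ, (∀ i, 0 < ξ i) ∧ ∀ i, (M *ᵥ ξ) i < 0 := by
  have hdet : IsUnit (-M).det := by
    simpa using (isUnit_iff_isUnit_det _).1 (spectrum.notMem_iff.1 (hspec 0 le_rfl))
  set ξ := (-M)⁻¹ *ᵥ fun _ => (1 : ℝ)
  have hMξ : ∀ i, (M *ᵥ ξ) i = -1 := fun i => by
    have := congrFun (show -M *ᵥ ξ = fun _ => 1 by
      rw [mulVec_mulVec, mul_nonsing_inv _ hdet, one_mulVec]) i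
    rw [neg_mulVec, Pi.neg_apply] at this
    linarith
  have hξ : ∀ i, 0 ≤ ξ i := fun i =>
    Finset.sum_nonneg fun j _ => mul_nonneg (hM.inv_neg_apply_nonneg hspec i j) zero_le_one
  refine ⟨ξ, fun i => (hξ i).lt_of_ne fun hξi => ?_, fun i => by rw [hMξ]; norm_num⟩
  -- a zero entry of `ξ ≥ 0` would make `(M ξ) i` a sum of off-diagonal, nonnegative terms
  have : 0 ≤ (M *ᵥ ξ) i := Finset.sum_nonneg fun j _ => by
    rcases eq_or_ne i j with rfl | hij
    · simp [← hξi]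
    · exact mul_nonneg (hM i j hij) (hξ j)
  linarith [hMξ i]

lemma isSymm_diagonal_mul_add_transpose_mul_diagonal [DecidableEq n] (M : Matrix n n ℝ)
    (d : n → ℝ) : (diagonal d * M + Mᵀ * diagonal d).IsSymm := by
  rw [IsSymm, transpose_add, transpose_mul, transpose_mul, diagonal_transpose,
    transpose_transpose, add_comm]

lemma IsMetzler.diagonal_mul_add_transpose_mul_diagonal [DecidableEq n] {M : Matrix n n ℝ}
    (hM : M.IsMetzler) {d : n → ℝ} (hd : ∀ i, 0 ≤ d i) :
    (diagonal d * M + Mᵀ * diagonal d).IsMetzler := fun i j hij => by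
  simpa [diagonal_mul, mul_diagonal] using
    add_nonneg (mul_nonneg (hd i) (hM i j hij)) (mul_nonneg (hM j i hij.symm) (hd j))

/-- By AM-GM, `S i j x i x j ≤ S i j (ξ j x i² / ξ i + ξ i x j² / ξ j) / 2`, and these bounds sum
to `∑ i, (x i² / ξ i) (S ξ) i`. -/
lemma IsMetzler.dotProduct_mulVec_neg {S : Matrix n n ℝ} (hS : S.IsMetzler) (hsymm : S.IsSymm)
    {ξ : n → ℝ} (hξ : ∀ i, 0 < ξ i) (hSξ : ∀ i, (S *ᵥ ξ) i < 0) {x : n → ℝ} (hx : x ≠ 0) :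
    x ⬝ᵥ (S *ᵥ x) < 0 := by
  set w : n → ℝ := fun i => x i ^ 2 / ξ i
  have hterm : ∀ i j, x i * (S i j * x j) ≤ (S i j * ξ j * w i + S j i * ξ i * w j) / 2 := by
    intro i j
    rcases eq_or_ne i j with rfl | hij
    · have hw : ξ i * w i = x i ^ 2 := mul_div_cancel₀ _ (hξ i).ne'
      linear_combination (-S i i) * hw
    · have hamgm : 2 * (x i * x j) ≤ ξ j * w i + ξ i * w j := by
        have hi := (hξ i).ne'
        have hj := (hξ j).ne'
        have hsq : ξ j * w i + ξ i * w j - 2 * (x i * x j) =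
            (ξ j * x i - ξ i * x j) ^ 2 / (ξ i * ξ j) := by
          simp only [w]; field_simp; ring
        have : 0 ≤ (ξ j * x i - ξ i * x j) ^ 2 / (ξ i * ξ j) := by
          have := hξ i; have := hξ j; positivity
        linarith
      rw [hsymm.apply i j]
      nlinarith [mul_le_mul_of_nonneg_left hamgm (hS i j hij)]
  obtain ⟨i₀, hi₀⟩ : ∃ i, x i ≠ 0 := Function.ne_iff.1 hx
  calc x ⬝ᵥ (S *ᵥ x) = ∑ i, ∑ j, x i * (S i j * x j) := by
        simp only [dotProduct, mulVec, Finset.mul_sum]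
    _ ≤ ∑ i, ∑ j, (S i j * ξ j * w i + S j i * ξ i * w j) / 2 :=
        Finset.sum_le_sum fun i _ => Finset.sum_le_sum fun j _ => hterm i j
    _ = ∑ i, w i * (S *ᵥ ξ) i := by
        simp only [← Finset.sum_div, Finset.sum_add_distrib]
        rw [Finset.sum_comm (f := fun i j => S j i * ξ i * w j)]
        simp only [mulVec, dotProduct, Finset.mul_sum]
        rw [← two_mul, mul_div_cancel_left₀ _ two_ne_zero]
        exact Finset.sum_congr rfl fun i _ => Finset.sum_congr rfl fun j _ => by ring
    _ < 0 := Finset.sum_neg' (fun i _ => mul_nonpos_of_nonneg_of_nonpos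
          (div_nonneg (sq_nonneg _) (hξ i).le) (hSξ i).le)
        ⟨i₀, Finset.mem_univ _, mul_neg_of_pos_of_neg (div_pos (by positivity) (hξ i₀)) (hSξ i₀)⟩

end Matrix

lemma le_specAbs_of_mem_spectrum {n : ℕ} {M : Matrix (Fin n) (Fin n) ℝ} {r : ℝ}
    (hr : r ∈ spectrum ℝ M) : r ≤ specAbs M := by
  have hC : (r : ℂ) ∈ spectrum ℂ (M.map (algebraMap ℝ ℂ)) := by
    rw [mem_spectrum_iff_isRoot_charpoly, charpoly_map]
    exact (mem_spectrum_iff_isRoot_charpoly.1 hr).map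
  refine le_csSup ?_ ⟨r, hC, by simp⟩
  refine (((M.map (algebraMap ℝ ℂ)).finite_spectrum).image Complex.re).bddAbove.mono ?_
  rintro _ ⟨μ, hμ, rfl⟩
  exact ⟨μ, hμ, rfl⟩

lemma isMetzler_mzr {n : ℕ} (A : Matrix (Fin n) (Fin n) ℝ) : (mzr A).IsMetzler :=
  fun i j hij => by simp [mzr, hij]

lemma dotProduct_mulVec_le_of_mzr_le {n : ℕ} {B S : Matrix (Fin n) (Fin n) ℝ}
    (hBS : ∀ i j, mzr B i j ≤ S i j) (x : Fin n → ℝ) : x ⬝ᵥ (B *ᵥ x) ≤ |x| ⬝ᵥ (S *ᵥ |x|) := by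
  simp only [dotProduct, mulVec, Finset.mul_sum, Pi.abs_apply]
  refine Finset.sum_le_sum fun i _ => Finset.sum_le_sum fun j _ => ?_
  rcases eq_or_ne i j with rfl | hij
  · have := hBS i i
    simp only [mzr, if_true] at this
    calc x i * (B i i * x i) = B i i * (x i * x i) := by ring
      _ ≤ S i i * (x i * x i) := mul_le_mul_of_nonneg_right this (mul_self_nonneg _)
      _ = |x i| * (S i i * |x i|) := by rw [← abs_mul_abs_self (x i)]; ring
  · have := hBS i j
    simp only [mzr, if_neg hij] at this
    calc x i * (B i j * x j) ≤ |x i| * (|B i j| * |x j|) := by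
          rw [← abs_mul, ← abs_mul]; exact le_abs_self _
      _ ≤ |x i| * (S i j * |x j|) := by gcongr

lemma mzr_diagonal_mul_add_transpose_mul_diagonal_le {n : ℕ} (A : Matrix (Fin n) (Fin n) ℝ) {d : Fin n → ℝ}
    (hd : ∀ i, 0 ≤ d i) (i j : Fin n) :
    mzr (diagonal d * A + Aᵀ * diagonal d) i j ≤
      (diagonal d * mzr A + (mzr A)ᵀ * diagonal d) i j := by
  rcases eq_or_ne i j with rfl | hij
  · simp [mzr, diagonal_mul, mul_diagonal]
  · simp only [mzr, if_neg hij, Matrix.add_apply, diagonal_mul, mul_diagonal, transpose_apply,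
      if_neg hij.symm]
    calc |d i * A i j + A j i * d j| ≤ |d i * A i j| + |A j i * d j| := abs_add_le _ _
      _ = d i * |A i j| + |A j i| * d j := by
        rw [abs_mul, abs_mul, abs_of_nonneg (hd i), abs_of_nonneg (hd j)]

lemma posDef_neg_of_mzr_le {n : ℕ} {B S : Matrix (Fin n) (Fin n) ℝ} (hB : B.IsSymm)
    (hS : S.IsMetzler) (hSsymm : S.IsSymm) {ξ : Fin n → ℝ} (hξ : ∀ i, 0 < ξ i)
    (hSξ : ∀ i, (S *ᵥ ξ) i < 0) (hBS : ∀ i j, mzr B i j ≤ S i j) : (-B).PosDef := by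
  refine posDef_iff_dotProduct_mulVec.2 ⟨isHermitian_iff_isSymm.2 hB.neg, fun x hx => ?_⟩
  rw [star_trivial, neg_mulVec, dotProduct_neg, neg_pos]
  exact (dotProduct_mulVec_le_of_mzr_le hBS x).trans_lt
    (hS.dotProduct_mulVec_neg hSsymm hξ hSξ (by simpa using hx))

/-- If `A` is M-Hurwitz, i.e. `α(⌈A⌉_Mzr) < 0`, then `A` is Lyapunov diagonally
stable: there is `η > 0` with `[η]A + Aᵀ[η]` negative definite. -/
theorem mHurwitz_imp_lds {n : ℕ} (A : Matrix (Fin n) (Fin n) ℝ)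
    (h : specAbs (mzr A) < 0) :
    ∃ η : Fin n → ℝ, (∀ i, 0 < η i) ∧
      (-(Matrix.diagonal η * A + Aᵀ * Matrix.diagonal η)).PosDef := by
  set M := mzr A
  have hspec : ∀ r : ℝ, 0 ≤ r → r ∉ spectrum ℝ M := fun r hr hmem =>
    (h.trans_le hr).not_ge (le_specAbs_of_mem_spectrum hmem)
  obtain ⟨ξ, hξ, hMξ⟩ := (isMetzler_mzr A).exists_pos_mulVec_neg hspec
  obtain ⟨ζ, hζ, hMζ⟩ := (isMetzler_mzr A).transpose.exists_pos_mulVec_neg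
    (by rwa [spectrum_transpose])
  set d := ζ / ξ
  have hd : ∀ i, 0 < d i := fun i => div_pos (hζ i) (hξ i)
  have hdξ : diagonal d *ᵥ ξ = ζ := funext fun i => by
    rw [mulVec_diagonal]
    exact div_mul_cancel₀ _ (hξ i).ne'
  have hSξ : ∀ i, ((diagonal d * M + Mᵀ * diagonal d) *ᵥ ξ) i < 0 := fun i => by
    rw [add_mulVec, ← mulVec_mulVec, ← mulVec_mulVec, hdξ, Pi.add_apply, mulVec_diagonal]
    exact add_neg (mul_neg_of_pos_of_neg (hd i) (hMξ i)) (hMζ i)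
  exact ⟨d, hd, posDef_neg_of_mzr_le (isSymm_diagonal_mul_add_transpose_mul_diagonal A d)
    ((isMetzler_mzr A).diagonal_mul_add_transpose_mul_diagonal fun i => (hd i).le)
    (isSymm_diagonal_mul_add_transpose_mul_diagonal M d) hξ hSξ
    (mzr_diagonal_mul_add_transpose_mul_diagonal_le A fun i => (hd i).le)⟩
end

section
/- If A ∈ ℝ^{n×n} is Lyapunov diagonally stable, i.e., there exists a positive diagonal matrix P with PA + A^TP negative definite, then every principal submatrix of A is Hurwitz stable (all eigenvalues have negative real part). -/
/-!
If `Bx = μx` with `x ≠ 0` and `B` real, then `xᴴ(PB + BᵀP)x = 2 Re μ · xᴴPx` since `Bᵀ = Bᴴ`.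
Hence a positive definite `P` with `PB + BᵀP` negative definite forces `Re μ < 0` for every
eigenvalue `μ` of `B`. A principal submatrix of a Lyapunov diagonally stable matrix satisfies the
same condition with the corresponding principal submatrix of the diagonal `P`, since positive
definiteness passes to principal submatrices.
-/

open Matrix

namespace Matrix

variable {ι : Type*} [Fintype ι]

theorem exists_mulVec_eq_smul_of_mem_spectrum {K : Type*} [Field K] [DecidableEq ι]
    {A : Matrix ι ι K} {μ : K} (hμ : μ ∈ spectrum K A) : ∃ x ≠ 0, A *ᵥ x = μ • x := by
  rw [← spectrum_toLin', ← Module.End.hasEigenvalue_iff_mem_spectrum] at hμ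
  obtain ⟨x, hx⟩ := hμ.exists_hasEigenvector
  exact ⟨x, hx.2, hx.apply_eq_smul⟩

theorem re_star_dotProduct_map_ofReal_mulVec (M : Matrix ι ι ℝ) (x : ι → ℂ) :
    (star x ⬝ᵥ M.map (algebraMap ℝ ℂ) *ᵥ x).re =
      (fun i ↦ (x i).re) ⬝ᵥ M *ᵥ (fun i ↦ (x i).re) +
        (fun i ↦ (x i).im) ⬝ᵥ M *ᵥ (fun i ↦ (x i).im) := by
  simp only [dotProduct, mulVec, map_apply, Pi.star_apply, Complex.re_sum, Complex.mul_re,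
    Complex.mul_im, Complex.coe_algebraMap, Complex.ofReal_re, Complex.ofReal_im,
    RCLike.star_def, Complex.conj_re, Complex.conj_im, Finset.mul_sum, ← Finset.sum_add_distrib]
  refine Finset.sum_congr rfl fun i _ ↦ Finset.sum_congr rfl fun j _ ↦ ?_
  ring

theorem PosDef.re_star_dotProduct_map_ofReal_mulVec_pos {M : Matrix ι ι ℝ} (hM : M.PosDef)
    {x : ι → ℂ} (hx : x ≠ 0) : 0 < (star x ⬝ᵥ M.map (algebraMap ℝ ℂ) *ᵥ x).re := by
  rw [re_star_dotProduct_map_ofReal_mulVec]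
  by_cases h : (fun i ↦ (x i).re) = 0
  · have him : (fun i ↦ (x i).im) ≠ 0 := fun h' ↦
      hx (funext fun i ↦ Complex.ext (congrFun h i) (congrFun h' i))
    simpa [h] using hM.dotProduct_mulVec_pos him
  · simpa only [star_trivial] using add_pos_of_pos_of_nonneg (hM.dotProduct_mulVec_pos h)
      (hM.posSemidef.dotProduct_mulVec_nonneg (fun i ↦ (x i).im))

theorem re_neg_of_mem_spectrum_of_lyapunov [DecidableEq ι] {B P : Matrix ι ι ℝ} (hP : P.PosDef)
    (hB : (-(P * B + Bᵀ * P)).PosDef) {μ : ℂ}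
    (hμ : μ ∈ spectrum ℂ (B.map (algebraMap ℝ ℂ))) : μ.re < 0 := by
  set Bc := B.map (algebraMap ℝ ℂ)
  set Pc := P.map (algebraMap ℝ ℂ)
  obtain ⟨x, hx0, hx⟩ := exists_mulVec_eq_smul_of_mem_spectrum hμ
  have hBc_conj : Bᵀ.map (algebraMap ℝ ℂ) = Bcᴴ := by
    rw [← conjTranspose_eq_transpose_of_trivial, conjTranspose_map]
    intro r; simp
  have hPB : star x ⬝ᵥ Pc *ᵥ (Bc *ᵥ x) = μ * (star x ⬝ᵥ Pc *ᵥ x) := by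
    rw [hx, mulVec_smul, dotProduct_smul, smul_eq_mul]
  have hBP : star x ⬝ᵥ Bcᴴ *ᵥ (Pc *ᵥ x) = star μ * (star x ⬝ᵥ Pc *ᵥ x) := by
    rw [dotProduct_mulVec, ← star_mulVec, hx, star_smul, smul_dotProduct, smul_eq_mul]
  have hquad : star x ⬝ᵥ (P * B + Bᵀ * P).map (algebraMap ℝ ℂ) *ᵥ x
      = ((2 * μ.re : ℝ) : ℂ) * (star x ⬝ᵥ Pc *ᵥ x) := by
    rw [Matrix.map_add _ (map_add _), Matrix.map_mul, Matrix.map_mul, hBc_conj, add_mulVec,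
      dotProduct_add, ← mulVec_mulVec, ← mulVec_mulVec, hPB, hBP, ← add_mul, RCLike.star_def,
      Complex.add_conj]
  have hneg := hB.re_star_dotProduct_map_ofReal_mulVec_pos hx0
  rw [Matrix.map_neg _ (map_neg _), neg_mulVec, dotProduct_neg, Complex.neg_re, hquad,
    Complex.re_ofReal_mul] at hneg
  nlinarith [hP.re_star_dotProduct_map_ofReal_mulVec_pos hx0]

theorem submatrix_diagonal_mul_add_transpose_mul_diagonal {R m : Type*} [Fintype m] [Semiring R]
    [DecidableEq ι] [DecidableEq m] (d : ι → R) (A : Matrix ι ι R) (f : m → ι) :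
    (diagonal d * A + Aᵀ * diagonal d).submatrix f f =
      diagonal (d ∘ f) * A.submatrix f f + (A.submatrix f f)ᵀ * diagonal (d ∘ f) := by
  ext i j
  simp [diagonal_mul, mul_diagonal]

end Matrix

theorem specAbs_neg_of_forall_re_neg {k : ℕ} (hk : 0 < k) {B : Matrix (Fin k) (Fin k) ℝ}
    (hB : ∀ μ ∈ spectrum ℂ (B.map (algebraMap ℝ ℂ)), μ.re < 0) : specAbs B < 0 := by
  have : Nonempty (Fin k) := Fin.pos_iff_nonempty.mp hk
  set S := spectrum ℂ (B.map (algebraMap ℝ ℂ))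
  have hS : {r : ℝ | ∃ μ ∈ S, r = μ.re} = Complex.re '' S := by
    ext r; simp [eq_comm]
  unfold specAbs
  rw [hS, ((finite_spectrum _).image _).csSup_lt_iff
    ((spectrum.nonempty_of_isAlgClosed_of_finiteDimensional ℂ _).image _)]
  rintro _ ⟨μ, hμ, rfl⟩
  exact hB μ hμ

/-- If `A` is Lyapunov diagonally stable (there is a positive diagonal `P` with
`PA + AᵀP` negative definite), then every principal submatrix of `A` is
Hurwitz stable. -/
theorem lds_imp_totallyHurwitz {n : ℕ} (A : Matrix (Fin n) (Fin n) ℝ)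
    (η : Fin n → ℝ) (hη : ∀ i, 0 < η i)
    (h : (-(Matrix.diagonal η * A + Aᵀ * Matrix.diagonal η)).PosDef) :
    ∀ (k : ℕ), 0 < k → ∀ f : Fin k → Fin n, Function.Injective f →
      specAbs (A.submatrix f f) < 0 := by
  intro k hk f hf
  have hP : (diagonal (η ∘ f)).PosDef := PosDef.diagonal fun i ↦ hη (f i)
  have hLyap : (-(diagonal (η ∘ f) * A.submatrix f f
      + (A.submatrix f f)ᵀ * diagonal (η ∘ f))).PosDef := by
    rw [← submatrix_diagonal_mul_add_transpose_mul_diagonal]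
    exact h.submatrix hf
  exact specAbs_neg_of_forall_re_neg hk fun μ hμ ↦ re_neg_of_mem_spectrum_of_lyapunov hP hLyap hμ
end

section
/- Let ‖·‖ be a monotonic norm on ℝ^n with logarithmic norm μ, and for nonempty I ⊆ {1,…,n} let μ_I be the logarithmic norm of the norm ‖y‖_I = ‖pad_I(y)‖ on ℝ^{|I|}. Then for any A ∈ ℝ^{n×n}, μ_I(A_I) ≤ μ(A); in particular, if μ(A) < 0 then every principal submatrix of A is Hurwitz stable. -/
/-- Operator norm of a matrix induced by a given vector norm `N`. -/
noncomputable def opNorm {m : ℕ} (N : (Fin m → ℝ) → ℝ)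
    (M : Matrix (Fin m) (Fin m) ℝ) : ℝ :=
  sSup {c : ℝ | ∃ x : Fin m → ℝ, N x = 1 ∧ c = N (M.mulVec x)}

/-!
Monotonicity makes the coordinate projection onto `I` non-expansive, and padding `(1 + h A)_I y`
gives exactly the projection of `(1 + h A) (pad y)`. Hence the induced norms satisfy
`‖1 + h A_I‖_I ≤ ‖1 + h A‖` for every `h`, and so do the difference quotients and their limits.

For stability, every complex eigenvalue `c` of a real matrix `T` satisfies `‖c‖ ≤ ‖T‖` for an
induced norm: `T` acts on the real plane `{Re (z v)}` spanned by an eigenvector `v` as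
multiplication by `c`. With `T = 1 + h A_I` this gives `1 + h Re c ≤ ‖1 + h A_I‖_I`, so
`Re c ≤ μ_I(A_I) ≤ μ(A)`.
-/

open Filter Matrix Topology

structure IsMonotoneNorm {ι : Type*} (N : (ι → ℝ) → ℝ) : Prop where
  eq_zero_iff : ∀ x, N x = 0 ↔ x = 0
  smul : ∀ (a : ℝ) x, N (a • x) = |a| * N x
  add_le : ∀ x y, N (x + y) ≤ N x + N y
  mono : ∀ x y, (∀ i, |x i| ≤ |y i|) → N x ≤ N y

namespace IsMonotoneNorm

variable {ι κ : Type*} {N : (ι → ℝ) → ℝ}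

theorem map_zero (hN : IsMonotoneNorm N) : N 0 = 0 := by
  simpa using hN.smul 0 0

theorem nonneg (hN : IsMonotoneNorm N) (x : ι → ℝ) : 0 ≤ N x := by
  have h := hN.add_le x ((-1 : ℝ) • x)
  rw [neg_one_smul, add_neg_cancel, hN.map_zero, ← neg_one_smul ℝ x, hN.smul, abs_neg, abs_one,
    one_mul] at h
  linarith

theorem pos (hN : IsMonotoneNorm N) {x : ι → ℝ} (hx : x ≠ 0) : 0 < N x :=
  (hN.nonneg x).lt_of_ne' (mt (hN.eq_zero_iff x).1 hx)

theorem le_norm_mul [Fintype ι] (hN : IsMonotoneNorm N) (x : ι → ℝ) : N x ≤ ‖x‖ * N 1 := by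
  rw [← abs_norm, ← hN.smul]
  refine hN.mono _ _ fun i => ?_
  simpa using norm_le_pi_norm x i

theorem continuous [Fintype ι] (hN : IsMonotoneNorm N) : Continuous N := by
  refine (LipschitzWith.of_le_add_mul' (N 1) fun x y => ?_).continuous
  calc N x = N (y + (x - y)) := by rw [add_sub_cancel]
    _ ≤ N y + ‖x - y‖ * N 1 := (hN.add_le _ _).trans (by gcongr; exact hN.le_norm_mul _)
    _ = N y + N 1 * dist x y := by rw [dist_eq_norm, mul_comm]

theorem abs_apply_mul_single_le [DecidableEq ι] (hN : IsMonotoneNorm N) (x : ι → ℝ) (i : ι) :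
    |x i| * N (Pi.single i 1) ≤ N x := by
  rw [← hN.smul]
  refine hN.mono _ _ fun j => ?_
  rcases eq_or_ne j i with rfl | hji
  · simp
  · simp [hji]

theorem exists_norm_le_mul [Fintype ι] (hN : IsMonotoneNorm N) :
    ∃ C, ∀ x, ‖x‖ ≤ C * N x := by
  classical
  refine ⟨∑ i, (N (Pi.single i 1))⁻¹, fun x => ?_⟩
  have hC : 0 ≤ ∑ i, (N (Pi.single i (1 : ℝ)))⁻¹ :=
    Finset.sum_nonneg fun i _ => inv_nonneg.2 (hN.nonneg _)
  refine (pi_norm_le_iff_of_nonneg (mul_nonneg hC (hN.nonneg x))).2 fun i => ?_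
  have hi : 0 < N (Pi.single i (1 : ℝ)) := hN.pos (by simp)
  calc ‖x i‖ ≤ (N (Pi.single i 1))⁻¹ * N x := by
        rw [Real.norm_eq_abs, inv_mul_eq_div, le_div_iff₀ hi]; exact hN.abs_apply_mul_single_le x i
    _ ≤ _ := mul_le_mul_of_nonneg_right
        (Finset.single_le_sum (f := fun i => (N (Pi.single i (1 : ℝ)))⁻¹)
          (fun j _ => inv_nonneg.2 (hN.nonneg _)) (Finset.mem_univ i)) (hN.nonneg x)

theorem isCompact_unitSphere [Fintype ι] (hN : IsMonotoneNorm N) :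
    IsCompact {x | N x = 1} := by
  obtain ⟨C, hC⟩ := hN.exists_norm_le_mul
  refine Metric.isCompact_of_isClosed_isBounded (isClosed_eq hN.continuous continuous_const)
    ((Metric.isBounded_closedBall (x := 0) (r := C)).subset fun x hx => ?_)
  simpa [hx.out] using hC x

theorem comp_extend {f : κ → ι} (hN : IsMonotoneNorm N) (hf : f.Injective) :
    IsMonotoneNorm fun y : κ → ℝ => N (Function.extend f y 0) where
  eq_zero_iff y := by
    rw [hN.eq_zero_iff]
    exact (Function.extend_injective hf (0 : ι → ℝ)).eq_iff' (Function.extend_zero f)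
  smul a y := by
    rw [← hN.smul]
    simpa using congrArg N (Function.extend_smul a f y 0)
  add_le y z := by
    have h : Function.extend f (y + z) (0 : ι → ℝ) =
        Function.extend f y 0 + Function.extend f z 0 := by
      simpa using Function.extend_add f y z (0 : ι → ℝ) 0
    rw [h]
    exact hN.add_le _ _
  mono y z h := hN.mono _ _ fun i => by
    by_cases hi : ∃ j, f j = i
    · obtain ⟨j, rfl⟩ := hi
      simpa [hf.extend_apply] using h j
    · simp [Function.extend_apply' _ _ _ hi]

end IsMonotoneNorm

theorem Matrix.submatrix_mulVec_of_injective {ι κ : Type*} [Fintype ι] [Fintype κ]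
    {f : κ → ι} (hf : f.Injective) (M : Matrix ι ι ℝ) (y : κ → ℝ) :
    M.submatrix f f *ᵥ y = (M *ᵥ Function.extend f y 0) ∘ f := by
  ext i
  refine Fintype.sum_of_injective f hf _ _ (fun j hj => ?_) fun j => ?_
  · simp [Function.extend_apply' _ _ _ hj]
  · simp [hf.extend_apply]

theorem Matrix.re_mulVec_map_algebraMap {ι : Type*} [Fintype ι] (T : Matrix ι ι ℝ) (u : ι → ℂ) :
    (fun i => (T.map (algebraMap ℝ ℂ) *ᵥ u) i |>.re) = T *ᵥ fun i => (u i).re := by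
  ext i
  simp [mulVec, dotProduct, Complex.re_sum]

namespace IsMonotoneNorm

variable {m : ℕ} {N : (Fin m → ℝ) → ℝ}

theorem opNorm_nonneg (hN : IsMonotoneNorm N) (M : Matrix (Fin m) (Fin m) ℝ) :
    0 ≤ opNorm N M :=
  Real.sSup_nonneg fun _ ⟨_, _, hc⟩ => hc ▸ hN.nonneg _

theorem le_opNorm (hN : IsMonotoneNorm N) (M : Matrix (Fin m) (Fin m) ℝ) {x : Fin m → ℝ}
    (hx : N x = 1) : N (M *ᵥ x) ≤ opNorm N M := by
  have hcont : Continuous fun y : Fin m → ℝ => N (M *ᵥ y) :=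
    hN.continuous.comp (continuous_const.matrix_mulVec continuous_id)
  refine le_csSup ((hN.isCompact_unitSphere.image hcont).bddAbove.mono ?_) ⟨x, hx, rfl⟩
  rintro _ ⟨y, hy, rfl⟩
  exact ⟨y, hy, rfl⟩

theorem le_opNorm_mul (hN : IsMonotoneNorm N) (M : Matrix (Fin m) (Fin m) ℝ) (x : Fin m → ℝ) :
    N (M *ᵥ x) ≤ opNorm N M * N x := by
  rcases eq_or_ne x 0 with rfl | hx
  · simp [hN.map_zero]
  have hNx := hN.pos hx
  have hunit : N ((N x)⁻¹ • x) = 1 := by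
    rw [hN.smul, abs_of_pos (inv_pos.2 hNx), inv_mul_cancel₀ hNx.ne']
  have := hN.le_opNorm M hunit
  rwa [mulVec_smul, hN.smul, abs_of_pos (inv_pos.2 hNx), inv_mul_le_iff₀ hNx, mul_comm] at this

theorem opNorm_submatrix_le {n k : ℕ} {N : (Fin n → ℝ) → ℝ}
    (hN : IsMonotoneNorm N) {f : Fin k → Fin n} (hf : f.Injective) (M : Matrix (Fin n) (Fin n) ℝ) :
    opNorm (fun y => N (Function.extend f y 0)) (M.submatrix f f) ≤ opNorm N M := by
  refine Real.sSup_le ?_ (hN.opNorm_nonneg M)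
  rintro _ ⟨y, hy, rfl⟩
  have hproj : ∀ x : Fin n → ℝ, N (Function.extend f (x ∘ f) 0) ≤ N x := fun x =>
    hN.mono _ _ fun i => by
      by_cases hi : ∃ j, f j = i
      · obtain ⟨j, rfl⟩ := hi
        simp [hf.extend_apply]
      · simp [Function.extend_apply' _ _ _ hi]
  calc N (Function.extend f (M.submatrix f f *ᵥ y) 0)
      ≤ N (M *ᵥ Function.extend f y 0) := by
        rw [submatrix_mulVec_of_injective hf]; exact hproj _
    _ ≤ opNorm N M := by simpa [hy] using hN.le_opNorm_mul M (Function.extend f y 0)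

theorem norm_le_opNorm_of_mulVec_eq_smul (hN : IsMonotoneNorm N) (T : Matrix (Fin m) (Fin m) ℝ)
    {c : ℂ} {v : Fin m → ℂ} (hv : v ≠ 0) (hTv : T.map (algebraMap ℝ ℂ) *ᵥ v = c • v) :
    ‖c‖ ≤ opNorm N T := by
  set W : ℂ → Fin m → ℝ := fun z i => (z * v i).re with hW
  have hTW : ∀ z, T *ᵥ W z = W (z * c) := fun z => by
    have h := re_mulVec_map_algebraMap T (z • v)
    rw [mulVec_smul, hTv] at h
    simpa only [hW, Pi.smul_apply, smul_eq_mul, mul_assoc] using h.symm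
  have hWsmul : ∀ (r : ℝ) z, W (r * z) = r • W z := fun r z => by
    ext i
    simp only [hW, Pi.smul_apply, smul_eq_mul, mul_assoc, Complex.re_ofReal_mul]
  have hWcont : Continuous fun z => N (W z) := hN.continuous.comp (by fun_prop)
  obtain ⟨z₀, hz₀, hmax⟩ := (isCompact_sphere (0 : ℂ) 1).exists_isMaxOn
    ⟨1, by simp⟩ hWcont.continuousOn
  have hpos : 0 < N (W z₀) := by
    obtain ⟨i, hi⟩ := Function.ne_iff.1 hv
    by_contra! hle
    have hzero : ∀ z ∈ Metric.sphere (0 : ℂ) 1, W z = 0 := fun z hz =>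
      (hN.eq_zero_iff _).1 (le_antisymm ((hmax hz).out.trans hle) (hN.nonneg _))
    have hre := congrFun (hzero 1 (by simp)) i
    have him := congrFun (hzero Complex.I (by simp)) i
    simp only [hW, one_mul, Complex.I_mul_re, Pi.zero_apply, neg_eq_zero] at hre him
    exact hi (Complex.ext hre him)
  rcases eq_or_ne c 0 with rfl | hc
  · simpa using hN.opNorm_nonneg T
  -- Rotating the maximiser back by the phase of `c` gives a unit `q` with `T (W q) = ‖c‖ • W z₀`.
  set q := z₀ * (‖c‖ / c) with hq
  have hq1 : q ∈ Metric.sphere (0 : ℂ) 1 := by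
    simp [hq, mem_sphere_zero_iff_norm.1 hz₀, hc]
  have hqc : q * c = (‖c‖ : ℝ) * z₀ := by
    rw [hq]; field_simp
  refine le_of_mul_le_mul_right ?_ hpos
  calc ‖c‖ * N (W z₀) = N (T *ᵥ W q) := by rw [hTW, hqc, hWsmul, hN.smul, abs_norm]
    _ ≤ opNorm N T * N (W q) := hN.le_opNorm_mul T _
    _ ≤ opNorm N T * N (W z₀) := mul_le_mul_of_nonneg_left (hmax hq1) (hN.opNorm_nonneg T)

theorem re_le_of_tendsto (hN : IsMonotoneNorm N) (M : Matrix (Fin m) (Fin m) ℝ) {c : ℂ}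
    (hc : c ∈ spectrum ℂ (M.map (algebraMap ℝ ℂ))) {b : ℝ}
    (hb : Tendsto (fun h : ℝ => (opNorm N (1 + h • M) - 1) / h) (𝓝[>] 0) (𝓝 b)) :
    c.re ≤ b := by
  rw [← Matrix.spectrum_toLin', ← Module.End.hasEigenvalue_iff_mem_spectrum] at hc
  obtain ⟨v, hv⟩ := hc.exists_hasEigenvector
  have hMv : M.map (algebraMap ℝ ℂ) *ᵥ v = c • v := hv.apply_eq_smul
  refine ge_of_tendsto hb (eventually_mem_nhdsWithin.mono fun h (hh : 0 < h) => ?_)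
  have hTv : (1 + h • M).map (algebraMap ℝ ℂ) *ᵥ v = (1 + h * c) • v := by
    rw [Matrix.map_add _ (map_add _), Matrix.map_smul' _ _ _ (map_mul _), add_mulVec, smul_mulVec,
      hMv]
    simp only [Complex.coe_algebraMap, Complex.ofReal_one, Matrix.map_one, one_mulVec, smul_smul,
      add_smul, one_smul, Complex.ofReal_zero]
  have hnorm := hN.norm_le_opNorm_of_mulVec_eq_smul _ hv.2 hTv
  have hre : 1 + h * c.re ≤ ‖1 + h * c‖ := by simpa using Complex.re_le_norm (1 + h * c)
  rw [le_div_iff₀ hh]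
  linarith

theorem specAbs_le_of_tendsto (hN : IsMonotoneNorm N) (hm : 0 < m)
    (M : Matrix (Fin m) (Fin m) ℝ) {b : ℝ}
    (hb : Tendsto (fun h : ℝ => (opNorm N (1 + h • M) - 1) / h) (𝓝[>] 0) (𝓝 b)) :
    specAbs M ≤ b := by
  have : Nonempty (Fin m) := ⟨⟨0, hm⟩⟩
  obtain ⟨c, hc⟩ :=
    spectrum.nonempty_of_isAlgClosed_of_finiteDimensional ℂ (M.map (algebraMap ℝ ℂ))
  exact csSup_le ⟨c.re, c, hc, rfl⟩ fun _ ⟨c, hc, hr⟩ => hr ▸ hN.re_le_of_tendsto M hc hb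

end IsMonotoneNorm

/-- For a monotonic norm on ℝⁿ, with `μ(A) = a` and `μ_I(A_I) = b` the
logarithmic norms (one-sided limits below), we have `μ_I(A_I) ≤ μ(A)`;
in particular `μ(A) < 0` implies the principal submatrix `A_I` is Hurwitz. -/
theorem logNorm_submatrix_le {n k : ℕ} (hk : 0 < k)
    (N : (Fin n → ℝ) → ℝ)
    (hN0 : ∀ x, N x = 0 ↔ x = 0)
    (hNsmul : ∀ (a : ℝ) x, N (a • x) = |a| * N x)
    (hNadd : ∀ x y, N (x + y) ≤ N x + N y)
    (hNmono : ∀ x y : Fin n → ℝ, (∀ i, |x i| ≤ |y i|) → N x ≤ N y)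
    (f : Fin k → Fin n) (hf : Function.Injective f)
    (A : Matrix (Fin n) (Fin n) ℝ) (a b : ℝ)
    (ha : Filter.Tendsto (fun h : ℝ => (opNorm N (1 + h • A) - 1) / h)
      (nhdsWithin 0 (Set.Ioi 0)) (nhds a))
    (hb : Filter.Tendsto
      (fun h : ℝ => (opNorm (fun y : Fin k → ℝ => N (Function.extend f y 0))
        (1 + h • A.submatrix f f) - 1) / h)
      (nhdsWithin 0 (Set.Ioi 0)) (nhds b)) :
    b ≤ a ∧ (a < 0 → specAbs (A.submatrix f f) < 0) := by
  have hN : IsMonotoneNorm N := ⟨hN0, hNsmul, hNadd, hNmono⟩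
  have hba : b ≤ a := by
    refine le_of_tendsto_of_tendsto hb ha (eventually_mem_nhdsWithin.mono fun h (hh : 0 < h) => ?_)
    have hle := hN.opNorm_submatrix_le hf (1 + h • A)
    have hsub : (1 + h • A).submatrix f f = 1 + h • A.submatrix f f := by
      ext i j
      simp [one_apply, hf.eq_iff]
    rw [hsub] at hle
    exact div_le_div_of_nonneg_right (by linarith) hh.le
  exact ⟨hba, fun ha0 => ((hN.comp_extend hf).specAbs_le_of_tendsto hk _ hb).trans_lt
    (hba.trans_lt ha0)⟩
end

section
/- For any A ∈ ℝ^{n×n}, c ∈ ℝ^n, d_1 ≤ d_2 ∈ ℝ, and η ∈ ℝ^n_{>0}: max over d ∈ [d_1,d_2]^n of μ_{∞,[η]}([c] + [d]A) equals max{ μ_{∞,[η]}([c] + d_1 A), μ_{∞,[η]}([c] + d_2 A) }, where [c] and [d] denote diagonal matrices with diagonals c and d respectively. -/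
open Finset Matrix

/-- Weighted ℓ_∞ logarithmic norm:
`μ_{∞,[η]}(B) = max_i (B_{ii} + ∑_{j≠i} (η_i/η_j) |B_{ij}|)`. -/
noncomputable def muInf {n : ℕ} (η : Fin n → ℝ) (B : Matrix (Fin n) (Fin n) ℝ) : ℝ :=
  ⨆ i, (B i i + ∑ j ∈ univ.erase i, (η i / η j) * |B i j|)

private lemma lin_le_max {d₁ d₂ t k : ℝ} (ht : t ∈ Set.Icc d₁ d₂) :
    t * k ≤ max (d₁ * k) (d₂ * k) := by
  rcases le_or_gt 0 k with hk | hk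
  · exact le_max_of_le_right (mul_le_mul_of_nonneg_right ht.2 hk)
  · exact le_max_of_le_left (mul_le_mul_of_nonpos_right ht.1 hk.le)

private lemma conv_le_max {d₁ d₂ t a s : ℝ} (ht : t ∈ Set.Icc d₁ d₂) (hs : 0 ≤ s) :
    t * a + |t| * s ≤ max (d₁ * a + |d₁| * s) (d₂ * a + |d₂| * s) := by
  have key : t * a + |t| * s = max (t * (a + s)) (t * (a - s)) := by
    rcases abs_cases t with ⟨h1, h2⟩ | ⟨h1, h2⟩
    · rw [h1, max_eq_left (by nlinarith)]; ring
    · rw [h1, max_eq_right (by nlinarith)]; ring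
  have e1 : ∀ d : ℝ, d * (a + s) ≤ d * a + |d| * s := fun d => by
    nlinarith [le_abs_self d, mul_le_mul_of_nonneg_right (le_abs_self d) hs]
  have e2 : ∀ d : ℝ, d * (a - s) ≤ d * a + |d| * s := fun d => by
    nlinarith [neg_abs_le d, mul_le_mul_of_nonneg_right (neg_abs_le d) hs]
  rw [key]
  refine max_le ?_ ?_
  · exact (lin_le_max ht).trans (max_le_max (e1 d₁) (e1 d₂))
  · exact (lin_le_max ht).trans (max_le_max (e2 d₁) (e2 d₂))

/-- `max_{d ∈ [d₁,d₂]ⁿ} μ_{∞,[η]}([c] + [d]A)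
      = max { μ_{∞,[η]}([c] + d₁A), μ_{∞,[η]}([c] + d₂A) }`. -/
theorem worst_case_muInf_left {n : ℕ} (A : Matrix (Fin n) (Fin n) ℝ)
    (c : Fin n → ℝ) (d₁ d₂ : ℝ) (hd : d₁ ≤ d₂) (η : Fin n → ℝ)
    (hη : ∀ i, 0 < η i) :
    IsGreatest
      {r : ℝ | ∃ d : Fin n → ℝ, (∀ i, d i ∈ Set.Icc d₁ d₂) ∧
        r = muInf η (Matrix.diagonal c + Matrix.diagonal d * A)}
      (max (muInf η (Matrix.diagonal c + d₁ • A))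
           (muInf η (Matrix.diagonal c + d₂ • A))) := by
  set f : ℝ → Fin n → ℝ := fun t i =>
    c i + t * A i i + |t| * ∑ j ∈ univ.erase i, (η i / η j) * |A i j| with hf
  have hrow : ∀ t i, (c i + t * A i i) + ∑ j ∈ univ.erase i, (η i / η j) * |t * A i j|
      = f t i := by
    intro t i
    simp only [hf, Finset.mul_sum, abs_mul]
    congr 1
    refine Finset.sum_congr rfl fun j _ => by ring
  have hmu_smul : ∀ t : ℝ, muInf η (Matrix.diagonal c + t • A) = ⨆ i, f t i := by
    intro t
    unfold muInf
    refine iSup_congr fun i => ?_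
    rw [← hrow t i]
    congr 1
    · simp [Matrix.add_apply, Matrix.diagonal_apply_eq]
    · refine Finset.sum_congr rfl fun j hj => ?_
      have hji : j ≠ i := Finset.ne_of_mem_erase hj
      simp [Matrix.add_apply, Matrix.diagonal_apply_ne' c hji]
  have hmu_diag : ∀ d : Fin n → ℝ,
      muInf η (Matrix.diagonal c + Matrix.diagonal d * A) = ⨆ i, f (d i) i := by
    intro d
    unfold muInf
    refine iSup_congr fun i => ?_
    rw [← hrow (d i) i]
    congr 1
    · simp [Matrix.add_apply, Matrix.diagonal_apply_eq, Matrix.diagonal_mul]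
    · refine Finset.sum_congr rfl fun j hj => ?_
      have hji : j ≠ i := Finset.ne_of_mem_erase hj
      simp [Matrix.add_apply, Matrix.diagonal_apply_ne' c hji, Matrix.diagonal_mul]
  have hs : ∀ i, 0 ≤ ∑ j ∈ univ.erase i, (η i / η j) * |A i j| := by
    intro i
    refine Finset.sum_nonneg fun j _ => ?_
    exact mul_nonneg (div_nonneg (hη i).le (hη j).le) (abs_nonneg _)
  have hconv : ∀ t ∈ Set.Icc d₁ d₂, ∀ i, f t i ≤ max (f d₁ i) (f d₂ i) := by
    intro t ht i
    simp only [hf]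
    have := conv_le_max (a := A i i)
      (s := ∑ j ∈ univ.erase i, (η i / η j) * |A i j|) ht (hs i)
    rcases le_max_iff.mp this with h | h
    · exact le_max_of_le_left (by linarith)
    · exact le_max_of_le_right (by linarith)
  -- boundedness of ranges
  have hbdd : ∀ g : Fin n → ℝ, BddAbove (Set.range g) := fun g =>
    (Set.finite_range g).bddAbove
  constructor
  · -- membership: choose d i pointwise achieving the max
    refine ⟨fun i => if f d₁ i ≤ f d₂ i then d₂ else d₁, fun i => ?_, ?_⟩
    · dsimp only; split <;> simp [Set.mem_Icc, hd]
    · rw [hmu_diag, hmu_smul, hmu_smul]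
      have hpt : ∀ i, f ((fun i => if f d₁ i ≤ f d₂ i then d₂ else d₁) i) i
          = max (f d₁ i) (f d₂ i) := by
        intro i
        dsimp only
        split
        · rw [max_eq_right ‹_›]
        · rw [max_eq_left (le_of_not_ge ‹_›)]
      rcases Nat.eq_zero_or_pos n with hn | hn
      · subst hn
        simp [Real.iSup_of_isEmpty]
      · have : Nonempty (Fin n) := ⟨⟨0, hn⟩⟩
        apply le_antisymm
        · refine max_le (ciSup_le fun i => ?_) (ciSup_le fun i => ?_)
          · exact le_trans (by rw [hpt i]; exact le_max_left _ _)
              (le_ciSup (hbdd _) i)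
          · exact le_trans (by rw [hpt i]; exact le_max_right _ _)
              (le_ciSup (hbdd _) i)
        · refine ciSup_le fun i => ?_
          rw [hpt i]
          exact max_le_max (le_ciSup (hbdd _) i) (le_ciSup (hbdd _) i)
  · -- upper bound
    rintro r ⟨d, hdIcc, rfl⟩
    rw [hmu_diag, hmu_smul, hmu_smul]
    rcases Nat.eq_zero_or_pos n with hn | hn
    · subst hn
      simp [Real.iSup_of_isEmpty]
    · have : Nonempty (Fin n) := ⟨⟨0, hn⟩⟩
      refine ciSup_le fun i => ?_
      refine (hconv (d i) (hdIcc i) i).trans ?_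
      exact max_le_max (le_ciSup (hbdd _) i) (le_ciSup (hbdd _) i)
end

section
/- For any A ∈ ℝ^{n×n}, c ∈ ℝ^n, d_1 ≤ d_2 ∈ ℝ, η ∈ ℝ^n_{>0}, and d̄ := max{|d_1|,|d_2|}: max over d ∈ [d_1,d_2]^n of μ_{∞,[η]}([c] + A[d]) equals max{ μ_{∞,[η]}([c] + d̄A − (d̄−d_1)(I_n ∘ A)), μ_{∞,[η]}([c] + d̄A − (d̄−d_2)(I_n ∘ A)) }. -/
open Finset Matrix

/-- Row functional of `[c] + A[d]`. -/
noncomputable def rowF {n : ℕ} (η c : Fin n → ℝ) (A : Matrix (Fin n) (Fin n) ℝ)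
    (d : Fin n → ℝ) (i : Fin n) : ℝ :=
  c i + A i i * d i + ∑ j ∈ univ.erase i, (η i / η j) * (|A i j| * |d j|)

/-- Row functional of the extremal matrices. -/
noncomputable def rowG {n : ℕ} (η c : Fin n → ℝ) (A : Matrix (Fin n) (Fin n) ℝ)
    (db t : ℝ) (i : Fin n) : ℝ :=
  c i + A i i * t + ∑ j ∈ univ.erase i, (η i / η j) * (|A i j| * db)

lemma muInf_entry {n : ℕ} (η c : Fin n → ℝ) (A : Matrix (Fin n) (Fin n) ℝ)
    (d : Fin n → ℝ) :
    muInf η (Matrix.diagonal c + A * Matrix.diagonal d) = ⨆ i, rowF η c A d i := by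
  unfold muInf rowF
  congr 1; funext i
  have h1 : (Matrix.diagonal c + A * Matrix.diagonal d) i i = c i + A i i * d i := by
    simp [Matrix.add_apply, Matrix.mul_diagonal]
  rw [h1]
  congr 1
  refine Finset.sum_congr rfl fun j hj => ?_
  have hji : j ≠ i := (Finset.mem_erase.mp hj).1
  have h2 : (Matrix.diagonal c + A * Matrix.diagonal d) i j = A i j * d j := by
    simp [Matrix.add_apply, Matrix.mul_diagonal, Matrix.diagonal_apply_ne' c hji]
  rw [h2, abs_mul]

lemma muInf_extremal {n : ℕ} (η c : Fin n → ℝ) (A : Matrix (Fin n) (Fin n) ℝ)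
    {db : ℝ} (hdb : 0 ≤ db) (t : ℝ) :
    muInf η (Matrix.diagonal c + db • A - (db - t) • Matrix.hadamard 1 A)
      = ⨆ i, rowG η c A db t i := by
  unfold muInf rowG
  congr 1; funext i
  have h1 : (Matrix.diagonal c + db • A - (db - t) • Matrix.hadamard 1 A) i i
      = c i + A i i * t := by
    simp [Matrix.sub_apply, Matrix.add_apply, Matrix.smul_apply, Matrix.hadamard_apply,
      Matrix.one_apply, smul_eq_mul]
    ring
  rw [h1]
  congr 1
  refine Finset.sum_congr rfl fun j hj => ?_
  have hji : j ≠ i := (Finset.mem_erase.mp hj).1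
  have h2 : (Matrix.diagonal c + db • A - (db - t) • Matrix.hadamard 1 A) i j
      = db * A i j := by
    simp [Matrix.sub_apply, Matrix.add_apply, Matrix.smul_apply, Matrix.hadamard_apply,
      Matrix.one_apply, Matrix.diagonal_apply_ne' c hji, (Ne.symm hji : i ≠ j), smul_eq_mul]
  rw [h2, abs_mul, abs_of_nonneg hdb, mul_comm db]

/-- `max_{d ∈ [d₁,d₂]ⁿ} μ_{∞,[η]}([c] + A[d])` equals
`max { μ_{∞,[η]}([c] + d̄A − (d̄−d₁)(Iₙ∘A)), μ_{∞,[η]}([c] + d̄A − (d̄−d₂)(Iₙ∘A)) }`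
with `d̄ = max{|d₁|,|d₂|}`. -/
theorem worst_case_muInf_right {n : ℕ} (A : Matrix (Fin n) (Fin n) ℝ)
    (c : Fin n → ℝ) (d₁ d₂ : ℝ) (hd : d₁ ≤ d₂) (η : Fin n → ℝ)
    (hη : ∀ i, 0 < η i) :
    IsGreatest
      {r : ℝ | ∃ d : Fin n → ℝ, (∀ i, d i ∈ Set.Icc d₁ d₂) ∧
        r = muInf η (Matrix.diagonal c + A * Matrix.diagonal d)}
      (max
        (muInf η (Matrix.diagonal c + max |d₁| |d₂| • A -
          (max |d₁| |d₂| - d₁) • Matrix.hadamard 1 A))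
        (muInf η (Matrix.diagonal c + max |d₁| |d₂| • A -
          (max |d₁| |d₂| - d₂) • Matrix.hadamard 1 A))) := by
  set db := max |d₁| |d₂| with hdb_def
  have hdb0 : 0 ≤ db := le_trans (abs_nonneg d₁) (le_max_left _ _)
  have habs : ∀ x, x ∈ Set.Icc d₁ d₂ → |x| ≤ db := by
    intro x hx
    rw [abs_le]
    exact ⟨le_trans (neg_le_neg (le_max_left _ _)) (le_trans (neg_abs_le d₁) hx.1),
           le_trans hx.2 (le_trans (le_abs_self d₂) (le_max_right _ _))⟩
  rcases Nat.eq_zero_or_pos n with hn | hn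
  · subst hn
    constructor
    · exact ⟨fun _ => d₁, fun i => i.elim0, by simp [muInf]⟩
    · rintro r ⟨d, -, rfl⟩
      simp [muInf]
  · have hNE : Nonempty (Fin n) := ⟨⟨0, hn⟩⟩
    -- pointwise bound
    have hfg : ∀ (d : Fin n → ℝ), (∀ i, d i ∈ Set.Icc d₁ d₂) →
        ∀ i, rowF η c A d i ≤ max (rowG η c A db d₁ i) (rowG η c A db d₂ i) := by
      intro d hdm i
      have hsum : ∑ j ∈ univ.erase i, (η i / η j) * (|A i j| * |d j|)
          ≤ ∑ j ∈ univ.erase i, (η i / η j) * (|A i j| * db) := by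
        refine Finset.sum_le_sum fun j _ => ?_
        have h1 : (0:ℝ) ≤ η i / η j := le_of_lt (div_pos (hη i) (hη j))
        have h2 := habs (d j) (hdm j)
        have h3 := abs_nonneg (A i j)
        exact mul_le_mul_of_nonneg_left (mul_le_mul_of_nonneg_left h2 h3) h1
      have hdiag : A i i * d i ≤ max (A i i * d₁) (A i i * d₂) := by
        rcases le_or_gt 0 (A i i) with h | h
        · exact le_max_of_le_right (mul_le_mul_of_nonneg_left (hdm i).2 h)
        · exact le_max_of_le_left (mul_le_mul_of_nonpos_left (hdm i).1 h.le)
      unfold rowF rowG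
      rcases le_total (A i i * d₁) (A i i * d₂) with h | h
      · rw [max_eq_right h] at hdiag
        exact le_max_of_le_right (by linarith)
      · rw [max_eq_left h] at hdiag
        exact le_max_of_le_left (by linarith)
    have bddF : ∀ d : Fin n → ℝ, BddAbove (Set.range (rowF η c A d)) :=
      fun d => Set.Finite.bddAbove (Set.finite_range _)
    have bddG : ∀ t : ℝ, BddAbove (Set.range (rowG η c A db t)) :=
      fun t => Set.Finite.bddAbove (Set.finite_range _)
    -- general upper bound
    have hub : ∀ (d : Fin n → ℝ), (∀ i, d i ∈ Set.Icc d₁ d₂) →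
        (⨆ i, rowF η c A d i) ≤
          max (⨆ i, rowG η c A db d₁ i) (⨆ i, rowG η c A db d₂ i) := by
      intro d hdm
      refine ciSup_le fun i => (hfg d hdm i).trans (max_le_max ?_ ?_)
      · exact le_ciSup (bddG d₁) i
      · exact le_ciSup (bddG d₂) i
    constructor
    · -- membership
      obtain ⟨t, ht, htmax⟩ : ∃ t, t ∈ Set.Icc d₁ d₂ ∧
          max (⨆ i, rowG η c A db d₁ i) (⨆ i, rowG η c A db d₂ i)
            = ⨆ i, rowG η c A db t i := by
        rcases le_total (⨆ i, rowG η c A db d₁ i) (⨆ i, rowG η c A db d₂ i) with h | h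
        · exact ⟨d₂, ⟨hd, le_refl _⟩, max_eq_right h⟩
        · exact ⟨d₁, ⟨le_refl _, hd⟩, max_eq_left h⟩
      obtain ⟨i₀, hi₀⟩ := Finite.exists_max (rowG η c A db t)
      have hsup_t : (⨆ i, rowG η c A db t i) = rowG η c A db t i₀ :=
        le_antisymm (ciSup_le hi₀) (le_ciSup (bddG t) i₀)
      set e : ℝ := if |d₁| ≤ |d₂| then d₂ else d₁ with he_def
      have he_abs : |e| = db := by
        rw [he_def]
        split_ifs with h
        · rw [hdb_def, max_eq_right h]
        · rw [hdb_def, max_eq_left (le_of_not_ge h)]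
      have he_mem : e ∈ Set.Icc d₁ d₂ := by
        rw [he_def]; split_ifs
        · exact ⟨hd, le_refl _⟩
        · exact ⟨le_refl _, hd⟩
      set d : Fin n → ℝ := fun j => if j = i₀ then t else e with hd_def
      have hd_mem : ∀ i, d i ∈ Set.Icc d₁ d₂ := by
        intro i; rw [hd_def]; dsimp only; split_ifs
        · exact ht
        · exact he_mem
      have hF_eq : rowF η c A d i₀ = rowG η c A db t i₀ := by
        unfold rowF rowG
        have hdi : d i₀ = t := by rw [hd_def]; simp
        rw [hdi]
        congr 1
        refine Finset.sum_congr rfl fun j hj => ?_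
        have hji : j ≠ i₀ := (Finset.mem_erase.mp hj).1
        have : d j = e := by rw [hd_def]; simp [hji]
        rw [this, he_abs]
      refine ⟨d, hd_mem, ?_⟩
      rw [muInf_entry, muInf_extremal η c A hdb0, muInf_extremal η c A hdb0, htmax]
      refine le_antisymm ?_ ((htmax ▸ hub d hd_mem))
      calc (⨆ i, rowG η c A db t i) = rowF η c A d i₀ := by rw [hsup_t, hF_eq]
        _ ≤ ⨆ i, rowF η c A d i := le_ciSup (bddF d) i₀
    · rintro r ⟨d, hdm, rfl⟩
      rw [muInf_entry, muInf_extremal η c A hdb0, muInf_extremal η c A hdb0]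
      exact hub d hdm
end

section
/- Let f : U → ℝ^n be locally Lipschitz on an open convex set U ⊆ ℝ^n, let ‖·‖ be a norm on ℝ^n with compatible weak pairing ⟦·,·⟧ satisfying Deimling's inequality, and let c ∈ ℝ. If μ(Df(x)) ≤ c for almost every x ∈ U (where Df exists a.e. by Rademacher's theorem), then ⟦f(x)−f(y), x−y⟧ ≤ c‖x−y‖² for all x, y ∈ U. -/
/-!
Fix `x, y ∈ U` and put `v = x - y`. The functional `p = ⟦·, v⟧` is sublinear, so by
Hahn–Banach some linear `ℓ ≤ p` satisfies `ℓ (f x - f y) = p (f x - f y)`; it suffices to show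
`ℓ (f x) - ℓ (f y) ≤ c ‖v‖²`. Wherever `f` is differentiable, `(ℓ ∘ f)' v = ℓ (Df v) ≤ p (Df v)
≤ c ‖v‖²`. By Rademacher and a Fubini argument, almost every line parallel to `v` near the
segment `[y, x]` meets the bad set in a null set, and along such a line the Lipschitz function
`ℓ ∘ f` obeys the fundamental theorem of calculus, which gives the bound there. Continuity of
`ℓ ∘ f` transfers it to the segment itself.
-/

open MeasureTheory Filter Set Topology Metric
open scoped NNReal

theorem exists_linearMap_le_sublinear_eq {E : Type*} [AddCommGroup E] [Module ℝ E] {p : E → ℝ}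
    (hadd : ∀ x y, p (x + y) ≤ p x + p y) (hsmul : ∀ a : ℝ, 0 ≤ a → ∀ x, p (a • x) = a * p x)
    (u : E) : ∃ ℓ : E →ₗ[ℝ] ℝ, (∀ x, ℓ x ≤ p x) ∧ ℓ u = p u := by
  have hp0 : p 0 = 0 := by simpa using hsmul 0 le_rfl 0
  have hline : ∀ c : ℝ, c * p u ≤ p (c • u) := fun c => by
    rcases le_total 0 c with hc | hc
    · exact (hsmul c hc u).ge
    · have := hadd (c • u) ((-c) • u)
      rw [← add_smul, add_neg_cancel, zero_smul, hp0, hsmul _ (neg_nonneg.mpr hc)] at this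
      linarith
  have H : ∀ c : ℝ, c • u = 0 → c • p u = 0 := fun c hc => by
    rcases smul_eq_zero.mp hc with rfl | rfl <;> simp [hp0]
  obtain ⟨ℓ, hℓu, hℓp⟩ := exists_extension_of_le_sublinear (.mkSpanSingleton' u (p u) H) p
    (fun c hc => hsmul c hc.le) hadd <| by
      rintro ⟨x, hx⟩
      obtain ⟨c, rfl⟩ := Submodule.mem_span_singleton.mp hx
      exact (LinearPMap.mkSpanSingleton'_apply u (p u) H c hx).trans_le (hline c)
  exact ⟨ℓ, hℓp, (hℓu ⟨u, Submodule.mem_span_singleton_self u⟩).trans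
    (LinearPMap.mkSpanSingleton'_apply_self u (p u) H _)⟩

theorem AbsolutelyContinuousOnInterval.sub_le_mul_of_ae_hasDerivAt_le {φ : ℝ → ℝ} {a b m : ℝ}
    (hab : a ≤ b) (hφ : AbsolutelyContinuousOnInterval φ a b)
    (hderiv : ∀ᵐ t, t ∈ Icc a b → ∃ d ≤ m, HasDerivAt φ d t) :
    φ b - φ a ≤ m * (b - a) := by
  rw [← hφ.integral_deriv_eq_sub]
  calc ∫ t in a..b, deriv φ t ≤ ∫ _ in a..b, m :=
        intervalIntegral.integral_mono_ae_restrict hab hφ.intervalIntegrable_deriv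
          intervalIntegrable_const <| by
          rw [EventuallyLE, ae_restrict_iff' measurableSet_Icc]
          filter_upwards [hderiv] with t ht htI
          obtain ⟨d, hdm, hd⟩ := ht htI
          exact hd.deriv ▸ hdm
    _ = m * (b - a) := by simp [mul_comm]

theorem LipschitzWith.comp_locallyLipschitzOn {α β γ : Type*} [PseudoEMetricSpace α]
    [PseudoEMetricSpace β] [PseudoEMetricSpace γ] {f : β → γ} {g : α → β} {s : Set α} {K : ℝ≥0}
    (hf : LipschitzWith K f) (hg : LocallyLipschitzOn s g) : LocallyLipschitzOn s (f ∘ g) :=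
  fun _ hx =>
    let ⟨_, t, ht, hgt⟩ := hg hx
    ⟨_, t, ht, hf.comp_lipschitzOnWith hgt⟩

theorem ContinuousAt.le_of_ae_le {X : Type*} [TopologicalSpace X] [MeasurableSpace X]
    {μ : Measure X} [μ.IsOpenPosMeasure] {h : X → ℝ} {x : X} {s : Set X} {m : ℝ}
    (hh : ContinuousAt h x) (hs : s ∈ 𝓝 x) (hle : ∀ᵐ y ∂μ, y ∈ s → h y ≤ m) : h x ≤ m := by
  have hfreq : ∃ᶠ y in 𝓝 x, y ∈ s → h y ≤ m :=
    mem_closure_iff_frequently.mp (Measure.dense_of_ae hle x)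
  exact isClosed_Iic.mem_of_frequently_of_tendsto
    ((hfreq.and_eventually hs).mono fun y hy => hy.1 hy.2) hh

section LineArgument

variable {E : Type*} [NormedAddCommGroup E] [NormedSpace ℝ E]

theorem LipschitzOnWith.sub_le_of_ae_hasFDerivAt_segment {g : E → ℝ} {K : ℝ≥0} {y v : E} {m : ℝ}
    (hg : LipschitzOnWith K g (segment ℝ y (y + v)))
    (hderiv : ∀ᵐ t : ℝ, t ∈ Icc 0 1 → ∃ A : E →L[ℝ] ℝ, HasFDerivAt g A (y + t • v) ∧ A v ≤ m) :
    g (y + v) - g y ≤ m := by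
  have hline : LipschitzWith ‖v‖₊ fun t : ℝ => y + t • v :=
    LipschitzWith.of_dist_le_mul fun s t => by
      simp [dist_eq_norm, ← sub_smul, norm_smul, mul_comm]
  have hmaps : MapsTo (fun t : ℝ => y + t • v) (uIcc 0 1) (segment ℝ y (y + v)) := by
    intro t ht
    rw [segment_eq_image']
    exact ⟨t, by simpa using ht, by simp⟩
  have := ((hg.comp hline.lipschitzOnWith hmaps).absolutelyContinuousOnInterval
    ).sub_le_mul_of_ae_hasDerivAt_le zero_le_one <| by
      filter_upwards [hderiv] with t ht htI
      obtain ⟨A, hA, hAv⟩ := ht htI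
      exact ⟨A v, hAv, hA.comp_hasDerivAt t
        (by simpa using ((hasDerivAt_id t).smul_const v).const_add y)⟩
  simpa using this

variable [FiniteDimensional ℝ E] [MeasurableSpace E] [BorelSpace E]
  {μ : Measure E} [μ.IsAddHaarMeasure]

theorem ae_ae_add_smul {P : E → Prop} (h : ∀ᵐ x ∂μ, P x) (v : E) :
    ∀ᵐ y ∂μ, ∀ᵐ t : ℝ, P (y + t • v) := by
  have hs : ∀ᵐ x ∂μ, x ∈ (toMeasurable μ {x | ¬ P x})ᶜ :=
    compl_mem_ae_iff.mpr (by rw [measure_toMeasurable]; exact ae_iff.mp h)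
  filter_upwards [(ae_ae_add_linearMap_mem_iff (LinearMap.toSpanSingleton ℝ E v) volume μ
    (measurableSet_toMeasurable _ _).compl).2 hs] with y hy
  filter_upwards [hy] with t ht
  by_contra hP
  exact ht (subset_toMeasurable _ _ (by simpa using hP))

theorem LocallyLipschitzOn.ae_differentiableAt {F : Type*} [NormedAddCommGroup F]
    [NormedSpace ℝ F] [FiniteDimensional ℝ F] {f : E → F} {U : Set E} (hU : IsOpen U)
    (hf : LocallyLipschitzOn U f) : ∀ᵐ x ∂μ, x ∈ U → DifferentiableAt ℝ f x := by
  refine ae_iff.mpr (measure_null_of_locally_null _ fun x hx => ?_)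
  simp only [Classical.not_imp] at hx
  obtain ⟨K, t, ht, hft⟩ := hf hx.1
  rw [hU.nhdsWithin_eq hx.1] at ht
  refine ⟨_, inter_mem_nhdsWithin _ (interior_mem_nhds.mpr ht), measure_mono_null ?_
    (ae_iff.mp (hft.ae_differentiableWithinAt_of_mem (μ := μ)))⟩
  rintro y ⟨hy, hyt⟩ hdiff
  exact hy fun _ =>
    (hdiff (interior_subset hyt)).differentiableAt (mem_interior_iff_mem_nhds.mp hyt)

theorem LocallyLipschitzOn.sub_le_of_ae_hasFDerivAt {g : E → ℝ} {U : Set E} (hU : IsOpen U)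
    (hUc : Convex ℝ U) (hg : LocallyLipschitzOn U g) {v : E} {m : ℝ}
    (hderiv : ∀ᵐ x ∂μ, x ∈ U → ∃ A : E →L[ℝ] ℝ, HasFDerivAt g A x ∧ A v ≤ m) {x : E}
    (hx : x ∈ U) (hxv : x + v ∈ U) : g (x + v) - g x ≤ m := by
  have hcpt : IsCompact (segment ℝ x (x + v)) := by
    rw [segment_eq_image']
    exact isCompact_Icc.image (by fun_prop)
  obtain ⟨δ, hδ, hδU⟩ := hcpt.exists_cthickening_subset_open hU (hUc.segment_subset hx hxv)
  obtain ⟨K, hK⟩ := (hg.mono hδU).exists_lipschitzOnWith_of_compact hcpt.cthickening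
  have hseg : ∀ y ∈ closedBall x δ,
      segment ℝ y (y + v) ⊆ cthickening δ (segment ℝ x (x + v)) := by
    intro y hy
    rw [segment_eq_image', segment_eq_image']
    rintro _ ⟨t, ht, rfl⟩
    refine mem_cthickening_of_dist_le _ (x + t • v) _ _ ⟨t, ht, by simp⟩ ?_
    simpa [dist_add_right] using hy
  have hgood : ∀ᵐ y ∂μ, y ∈ closedBall x δ → g (y + v) - g y ≤ m := by
    filter_upwards [ae_ae_add_smul hderiv v] with y hy hyδ
    refine (hK.mono (hseg y hyδ)).sub_le_of_ae_hasFDerivAt_segment ?_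
    filter_upwards [hy] with t ht htI
    exact ht (hδU (hseg y hyδ (by rw [segment_eq_image']; exact ⟨t, htI, by simp⟩)))
  have hcont : ContinuousAt (fun y => g (y + v) - g y) x :=
    ((hg.continuousOn.continuousAt (hU.mem_nhds hxv)).comp (f := (· + v))
      (continuous_add_const v).continuousAt).sub (hg.continuousOn.continuousAt (hU.mem_nhds hx))
  exact hcont.le_of_ae_le (closedBall_mem_nhds x hδ) hgood

end LineArgument

theorem osL_of_ae_logNorm_le_general {n : ℕ} (U : Set (Fin n → ℝ))
    (hUopen : IsOpen U) (hUconv : Convex ℝ U)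
    (f : (Fin n → ℝ) → (Fin n → ℝ))
    (hf : ∀ x ∈ U, ∃ K : NNReal, ∃ s ∈ nhdsWithin x U, LipschitzOnWith K f s)
    (WP : (Fin n → ℝ) → (Fin n → ℝ) → ℝ)
    (N : (Fin n → ℝ) → ℝ)
    (hsub : ∀ x₁ x₂ y, WP (x₁ + x₂) y ≤ WP x₁ y + WP x₂ y)
    (hhom₁ : ∀ (a : ℝ), 0 ≤ a → ∀ x y, WP (a • x) y = a * WP x y)
    (c : ℝ)
    (hmu : ∀ᵐ x ∂(volume : Measure (Fin n → ℝ)), x ∈ U →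
      ∀ A : (Fin n → ℝ) →L[ℝ] (Fin n → ℝ), HasFDerivAt f A x →
        ∀ v, WP (A v) v ≤ c * (N v) ^ 2) :
    ∀ x ∈ U, ∀ y ∈ U, WP (f x - f y) (x - y) ≤ c * (N (x - y)) ^ 2 := by
  intro x hx y hy
  obtain ⟨ℓ, hℓp, hℓ⟩ := exists_linearMap_le_sublinear_eq (p := fun u => WP u (x - y))
    (fun u w => hsub u w _) (fun a ha u => hhom₁ a ha u _) (f x - f y)
  let ℓ' := LinearMap.toContinuousLinearMap ℓ
  have hf' : LocallyLipschitzOn U f := fun z hz => hf z hz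
  have hderiv : ∀ᵐ z, z ∈ U → ∃ A : (Fin n → ℝ) →L[ℝ] ℝ,
      HasFDerivAt (ℓ' ∘ f) A z ∧ A (x - y) ≤ c * N (x - y) ^ 2 := by
    filter_upwards [hf'.ae_differentiableAt hUopen, hmu] with z hdiff hbound hz
    have hA := (hdiff hz).hasFDerivAt
    exact ⟨ℓ'.comp (fderiv ℝ f z), ℓ'.hasFDerivAt.comp z hA, (hℓp _).trans (hbound hz _ hA _)⟩
  have := (ℓ'.lipschitz.comp_locallyLipschitzOn hf').sub_le_of_ae_hasFDerivAt hUopen hUconv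
    hderiv hy (by simpa using hx)
  simpa [ℓ', ← hℓ] using this

/-- If `f` is locally Lipschitz on an open convex set `U`, `⟦·,·⟧` is a weak
pairing compatible with the norm `N` and satisfying Deimling's inequality, and
the logarithmic norm of the Jacobian (expressed via Lumer's equality) is at most
`c` almost everywhere on `U`, then `f` is one-sided Lipschitz with constant `c`. -/
theorem osL_of_ae_logNorm_le {n : ℕ} (U : Set (Fin n → ℝ))
    (hUopen : IsOpen U) (hUconv : Convex ℝ U)
    (f : (Fin n → ℝ) → (Fin n → ℝ))
    (hf : ∀ x ∈ U, ∃ K : NNReal, ∃ s ∈ nhdsWithin x U, LipschitzOnWith K f s)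
    (WP : (Fin n → ℝ) → (Fin n → ℝ) → ℝ)
    (N : (Fin n → ℝ) → ℝ) (hN : ∀ x, N x = Real.sqrt (WP x x))
    (hsub : ∀ x₁ x₂ y, WP (x₁ + x₂) y ≤ WP x₁ y + WP x₂ y)
    (hcont : ∀ y, Continuous fun x => WP x y)
    (hhom₁ : ∀ (a : ℝ), 0 ≤ a → ∀ x y, WP (a • x) y = a * WP x y)
    (hhom₂ : ∀ (a : ℝ), 0 ≤ a → ∀ x y, WP x (a • y) = a * WP x y)
    (hneg : ∀ x y, WP (-x) (-y) = WP x y)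
    (hpos : ∀ x, x ≠ 0 → 0 < WP x x)
    (hcs : ∀ x y, |WP x y| ≤ Real.sqrt (WP x x) * Real.sqrt (WP y y))
    (hdeim : ∀ x y L, Tendsto (fun h : ℝ => (N (y + h • x) - N y) / h)
      (nhdsWithin 0 (Set.Ioi 0)) (nhds L) → WP x y ≤ N y * L)
    (c : ℝ)
    (hmu : ∀ᵐ x ∂(volume : Measure (Fin n → ℝ)), x ∈ U →
      ∀ A : (Fin n → ℝ) →L[ℝ] (Fin n → ℝ), HasFDerivAt f A x →
        ∀ v, WP (A v) v ≤ c * (N v) ^ 2) :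
    ∀ x ∈ U, ∀ y ∈ U, WP (f x - f y) (x - y) ≤ c * (N (x - y)) ^ 2 :=
  osL_of_ae_logNorm_le_general U hUopen hUconv f hf WP N hsub hhom₁ c hmu
end

section
/- Let f : U → ℝ^n be locally Lipschitz on an open convex set U, with weak pairing ⟦·,·⟧ compatible with norm ‖·‖ and satisfying Deimling's inequality. If ⟦f(x)−f(y), x−y⟧ ≤ c‖x−y‖² for all x,y ∈ U, then at every point x ∈ U where f is differentiable, μ(Df(x)) ≤ c. -/
open Filter

/-- If `f` is locally Lipschitz on an open convex set `U` and one-sided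
Lipschitz with constant `c` with respect to a weak pairing `⟦·,·⟧` compatible
with the norm `N` and satisfying Deimling's inequality, then at every point of
differentiability the logarithmic norm of the Jacobian (via Lumer's equality)
is at most `c`. -/
theorem logNorm_le_of_osL {n : ℕ} (U : Set (Fin n → ℝ))
    (hUopen : IsOpen U) (hUconv : Convex ℝ U)
    (f : (Fin n → ℝ) → (Fin n → ℝ))
    (hf : ∀ x ∈ U, ∃ K : NNReal, ∃ s ∈ nhdsWithin x U, LipschitzOnWith K f s)
    (WP : (Fin n → ℝ) → (Fin n → ℝ) → ℝ)
    (N : (Fin n → ℝ) → ℝ) (hN : ∀ x, N x = Real.sqrt (WP x x))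
    (hsub : ∀ x₁ x₂ y, WP (x₁ + x₂) y ≤ WP x₁ y + WP x₂ y)
    (hcont : ∀ y, Continuous fun x => WP x y)
    (hhom₁ : ∀ (a : ℝ), 0 ≤ a → ∀ x y, WP (a • x) y = a * WP x y)
    (hhom₂ : ∀ (a : ℝ), 0 ≤ a → ∀ x y, WP x (a • y) = a * WP x y)
    (hneg : ∀ x y, WP (-x) (-y) = WP x y)
    (hpos : ∀ x, x ≠ 0 → 0 < WP x x)
    (hcs : ∀ x y, |WP x y| ≤ Real.sqrt (WP x x) * Real.sqrt (WP y y))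
    (hdeim : ∀ x y L, Tendsto (fun h : ℝ => (N (y + h • x) - N y) / h)
      (nhdsWithin 0 (Set.Ioi 0)) (nhds L) → WP x y ≤ N y * L)
    (c : ℝ)
    (hosl : ∀ x ∈ U, ∀ y ∈ U, WP (f x - f y) (x - y) ≤ c * (N (x - y)) ^ 2) :
    ∀ x ∈ U, ∀ A : (Fin n → ℝ) →L[ℝ] (Fin n → ℝ), HasFDerivAt f A x →
      ∀ v, WP (A v) v ≤ c * (N v) ^ 2 := by

  intro x hx A hA v
  have wnn : ∀ y, 0 ≤ WP y y := by
    intro y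
    rcases eq_or_ne y 0 with h | h
    · subst h
      have := hhom₁ 0 le_rfl 0 0
      simp only [zero_smul, zero_mul] at this
      exact this.ge
    · exact (hpos y h).le
  -- the difference quotient tends to A v along t → 0⁺
  have hline : HasDerivAt (fun t : ℝ => f (x + t • v)) (A v) 0 := by
    have h := hA.hasLineDerivAt (𝕜 := ℝ) v
    simpa [HasLineDerivAt] using h
  have htend : Tendsto (fun t : ℝ => t⁻¹ • (f (x + t • v) - f x))
      (nhdsWithin 0 (Set.Ioi 0)) (nhds (A v)) := by
    have h := (hasDerivAt_iff_tendsto_slope).1 hline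
    have h2 : Tendsto (slope (fun t : ℝ => f (x + t • v)) 0)
        (nhdsWithin 0 (Set.Ioi 0)) (nhds (A v)) :=
      h.mono_left (nhdsWithin_mono 0 (fun t ht => ne_of_gt ht))
    refine h2.congr fun t => ?_
    simp [slope_def_field, slope, vsub_eq_sub]
  have hmemU : ∀ᶠ t : ℝ in nhdsWithin 0 (Set.Ioi 0), x + t • v ∈ U := by
    have hc : Tendsto (fun t : ℝ => x + t • v) (nhds 0) (nhds x) := by
      have : Continuous fun t : ℝ => x + t • v := by continuity
      simpa using this.tendsto 0
    exact (hc.eventually (hUopen.mem_nhds hx)).filter_mono nhdsWithin_le_nhds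
  have key : ∀ᶠ t : ℝ in nhdsWithin 0 (Set.Ioi 0),
      WP (t⁻¹ • (f (x + t • v) - f x)) v ≤ c * N v ^ 2 := by
    filter_upwards [hmemU, self_mem_nhdsWithin] with t hmem ht
    have htpos : (0 : ℝ) < t := ht
    have h1 := hosl _ hmem x hx
    have hsub' : (x + t • v) - x = t • v := by abel
    rw [hsub'] at h1
    have hNtv : N (t • v) = t * N v := by
      rw [hN, hN]
      have : WP (t • v) (t • v) = t ^ 2 * WP v v := by
        rw [hhom₁ t htpos.le, hhom₂ t htpos.le]; ring
      rw [this, pow_two, Real.sqrt_mul (mul_self_nonneg t),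
        Real.sqrt_mul_self htpos.le]
    rw [hNtv, hhom₂ t htpos.le] at h1
    rw [hhom₁ t⁻¹ (inv_nonneg.2 htpos.le)]
    have h2 : WP (f (x + t • v) - f x) v ≤ c * t * N v ^ 2 := by
      refine le_of_mul_le_mul_left ?_ htpos
      calc t * WP (f (x + t • v) - f x) v ≤ c * (t * N v) ^ 2 := h1
        _ = t * (c * t * N v ^ 2) := by ring
    calc t⁻¹ * WP (f (x + t • v) - f x) v ≤ t⁻¹ * (c * t * N v ^ 2) :=
          mul_le_mul_of_nonneg_left h2 (inv_nonneg.2 htpos.le)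
      _ = c * N v ^ 2 := by field_simp
  exact le_of_tendsto (((hcont v).tendsto (A v)).comp htend) key
end

section
/- Consider the Hopfield neural network vector field f_H(x) = −Cx + AΦ(x) + u on ℝ^n, where C is positive semidefinite diagonal, A ∈ ℝ^{n×n}, u ∈ ℝ^n, and Φ(x) = (φ_1(x_1),…,φ_n(x_n)) is continuously differentiable with φ_i'(s) ∈ [d_1, d_2] for all s. Then for any η ∈ ℝ^n_{>0}, sup_x μ_{1,[η]}(Df_H(x)) ≤ max{ μ_{1,[η]}(−C + d_1 A), μ_{1,[η]}(−C + d_2 A) }. -/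
open Finset Matrix

/-!
The Jacobian at `x` is `-C + A D` with `D = diag(φᵢ'(xᵢ))`, whose `i`-th column coincides with
that of `-C + φᵢ'(xᵢ) A`. The `i`-th column term of `μ_{1,[η]}(-C + d A)` is convex in `d` (an
affine term plus a nonnegative combination of `|affine|` terms), so on `[d₁, d₂]` it is bounded by
its values at the endpoints, and these are bounded by `μ_{1,[η]}(-C + dₖ A)`.
-/

theorem hasFDerivAt_pi_map_diagonal {ι : Type*} [Fintype ι] [DecidableEq ι]
    {φ : ι → ℝ → ℝ} {φ' : ι → ℝ} {x : ι → ℝ} (h : ∀ i, HasDerivAt (φ i) (φ' i) (x i)) :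
    HasFDerivAt (fun z i => φ i (z i))
      (LinearMap.toContinuousLinearMap (diagonal φ').mulVecLin) x := by
  refine hasFDerivAt_pi'' fun i => ?_
  refine ((h i).comp_hasFDerivAt x (hasFDerivAt_apply (𝕜 := ℝ) i x)).congr_fderiv ?_
  ext v
  simp [mulVec_diagonal]

theorem hasFDerivAt_mulVec_add_mulVec_map {ι : Type*} [Fintype ι] [DecidableEq ι]
    (B A : Matrix ι ι ℝ) (u : ι → ℝ) {φ : ι → ℝ → ℝ} {φ' : ι → ℝ} {x : ι → ℝ}
    (h : ∀ i, HasDerivAt (φ i) (φ' i) (x i)) :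
    HasFDerivAt (fun z => B *ᵥ z + A *ᵥ (fun i => φ i (z i)) + u)
      (LinearMap.toContinuousLinearMap (B + A * diagonal φ').mulVecLin) x := by
  rw [mulVecLin_add, mulVecLin_mul, map_add]
  exact (((LinearMap.toContinuousLinearMap B.mulVecLin).hasFDerivAt).add
    ((LinearMap.toContinuousLinearMap A.mulVecLin).hasFDerivAt.comp x
      (hasFDerivAt_pi_map_diagonal h))).add_const u

theorem convexOn_abs_add_mul (b a : ℝ) : ConvexOn ℝ Set.univ fun d : ℝ => |b + d * a| := by
  refine ⟨convex_univ, fun x _ y _ p q hp hq hpq => ?_⟩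
  calc |b + (p • x + q • y) * a| = |p * (b + x * a) + q * (b + y * a)| := by
        rw [smul_eq_mul, smul_eq_mul]; congr 1; linear_combination (-b) * hpq
    _ ≤ |p * (b + x * a)| + |q * (b + y * a)| := abs_add_le _ _
    _ = p • |b + x * a| + q • |b + y * a| := by
        rw [abs_mul, abs_mul, abs_of_nonneg hp, abs_of_nonneg hq, smul_eq_mul, smul_eq_mul]

noncomputable def mu1Column {n : ℕ} (η : Fin n → ℝ) (M : Matrix (Fin n) (Fin n) ℝ) (i : Fin n) :
    ℝ :=
  M i i + ∑ j ∈ univ.erase i, (η j / η i) * |M j i|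

section mu1Column

variable {n : ℕ} {η : Fin n → ℝ}

theorem mu1Column_le_mu1 (M : Matrix (Fin n) (Fin n) ℝ) (i : Fin n) :
    mu1Column η M i ≤ mu1 η M :=
  le_ciSup (Set.finite_range _).bddAbove i

theorem mu1_le_max_of_mu1Column_le {M N₁ N₂ : Matrix (Fin n) (Fin n) ℝ}
    (h : ∀ i, mu1Column η M i ≤ max (mu1Column η N₁ i) (mu1Column η N₂ i)) :
    mu1 η M ≤ max (mu1 η N₁) (mu1 η N₂) := by
  rcases isEmpty_or_nonempty (Fin n) with _ | _
  · simp [mu1]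
  · exact ciSup_le fun i =>
      (h i).trans (max_le_max (mu1Column_le_mu1 N₁ i) (mu1Column_le_mu1 N₂ i))

theorem mu1Column_add_mul_diagonal (B A : Matrix (Fin n) (Fin n) ℝ) (d : Fin n → ℝ) (i : Fin n) :
    mu1Column η (B + A * diagonal d) i = mu1Column η (B + d i • A) i := by
  simp only [mu1Column, Matrix.add_apply, mul_diagonal, Matrix.smul_apply, smul_eq_mul, mul_comm]

theorem convexOn_mu1Column_add_smul (hη : ∀ j, 0 < η j) (B A : Matrix (Fin n) (Fin n) ℝ)
    (i : Fin n) : ConvexOn ℝ Set.univ fun d : ℝ => mu1Column η (B + d • A) i := by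
  simp only [mu1Column, Matrix.add_apply, Matrix.smul_apply, smul_eq_mul]
  have hdiag : ConvexOn ℝ Set.univ fun d : ℝ => B i i + d * A i i :=
    (convexOn_const _ convex_univ).add ((LinearMap.mulRight ℝ (A i i)).convexOn convex_univ)
  have hoff : ConvexOn ℝ Set.univ fun d : ℝ =>
      ∑ j ∈ univ.erase i, η j / η i * |B j i + d * A j i| := by
    have := Finset.sum_induction (s := univ.erase i)
      (fun j (d : ℝ) => η j / η i * |B j i + d * A j i|)
      (ConvexOn ℝ Set.univ) (fun _ _ => ConvexOn.add) (convexOn_const 0 convex_univ)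
      fun j _ => (convexOn_abs_add_mul _ _).smul (div_nonneg (hη j).le (hη i).le)
    simpa only [Finset.sum_fn] using this
  exact hdiag.add hoff

end mu1Column

theorem hopfield_jacobian_mu1_bound_general {n : ℕ}
    (cvec : Fin n → ℝ)
    (A : Matrix (Fin n) (Fin n) ℝ) (u : Fin n → ℝ)
    (d₁ d₂ : ℝ)
    (φ : Fin n → ℝ → ℝ) (hφ : ∀ i, Differentiable ℝ (φ i))
    (hslope : ∀ i s, deriv (φ i) s ∈ Set.Icc d₁ d₂)
    (η : Fin n → ℝ) (hη : ∀ i, 0 < η i) :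
    ∀ (x : Fin n → ℝ) (J : Matrix (Fin n) (Fin n) ℝ),
      HasFDerivAt
        (fun z : Fin n → ℝ =>
          -(Matrix.diagonal cvec).mulVec z + A.mulVec (fun i => φ i (z i)) + u)
        (LinearMap.toContinuousLinearMap J.mulVecLin) x →
      mu1 η J ≤
        max (mu1 η (-(Matrix.diagonal cvec) + d₁ • A))
            (mu1 η (-(Matrix.diagonal cvec) + d₂ • A)) := by
  intro x J hJ
  have hJ_eq : J = -diagonal cvec + A * diagonal fun i => deriv (φ i) (x i) := by
    have hD := hasFDerivAt_mulVec_add_mulVec_map (-diagonal cvec) A u fun i =>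
      (hφ i (x i)).hasDerivAt
    simp only [neg_mulVec] at hD
    exact Matrix.toLin'.injective (LinearMap.toContinuousLinearMap.injective (hJ.unique hD))
  subst hJ_eq
  refine mu1_le_max_of_mu1Column_le fun i => ?_
  rw [mu1Column_add_mul_diagonal]
  exact (convexOn_mu1Column_add_smul hη _ A i).le_max_of_mem_Icc (Set.mem_univ _)
    (Set.mem_univ _) (hslope i (x i))

/-- For the Hopfield vector field `f_H(x) = −Cx + AΦ(x) + u` with `C` PSD
diagonal and smooth slope-restricted activations, the weighted ℓ¹ log norm of
the Jacobian is bounded by `max{μ_{1,[η]}(−C+d₁A), μ_{1,[η]}(−C+d₂A)}`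
uniformly in `x`. -/
theorem hopfield_jacobian_mu1_bound {n : ℕ}
    (cvec : Fin n → ℝ) (hc : ∀ i, 0 ≤ cvec i)
    (A : Matrix (Fin n) (Fin n) ℝ) (u : Fin n → ℝ)
    (d₁ d₂ : ℝ) (hd : d₁ ≤ d₂)
    (φ : Fin n → ℝ → ℝ) (hφ : ∀ i, Differentiable ℝ (φ i))
    (hslope : ∀ i s, deriv (φ i) s ∈ Set.Icc d₁ d₂)
    (η : Fin n → ℝ) (hη : ∀ i, 0 < η i) :
    ∀ (x : Fin n → ℝ) (J : Matrix (Fin n) (Fin n) ℝ),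
      HasFDerivAt
        (fun z : Fin n → ℝ =>
          -(Matrix.diagonal cvec).mulVec z + A.mulVec (fun i => φ i (z i)) + u)
        (LinearMap.toContinuousLinearMap J.mulVecLin) x →
      mu1 η J ≤
        max (mu1 η (-(Matrix.diagonal cvec) + d₁ • A))
            (mu1 η (-(Matrix.diagonal cvec) + d₂ • A)) :=
  hopfield_jacobian_mu1_bound_general cvec A u d₁ d₂ φ hφ hslope η hη
end

section
/- Let A ∈ ℝ^{n×n} be a matrix whose Metzler majorant ⌈A⌉_Mzr is Hurwitz (α(⌈A⌉_Mzr) < 0) and irreducible, and let w_A ∈ ℝ^n_{>0} be a left dominant (Perron) eigenvector of ⌈A⌉_Mzr. Let Φ : ℝ^n → ℝ^n be diagonal and continuously differentiable with φ_i'(s) ≥ d_1 > 0 for all s. Then for the Persidskii-type vector field f_P(x) = AΦ(x), μ_{1,[w_A]}(Df_P(x)) ≤ d_1·α(⌈A⌉_Mzr) < 0 for all x. -/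
open Finset Matrix

/-- Irreducibility of a matrix: no nontrivial proper subset of indices is
invariant (there is always an edge leaving it). -/
def MatIrreducible {n : ℕ} (M : Matrix (Fin n) (Fin n) ℝ) : Prop :=
  ∀ S : Set (Fin n), S.Nonempty → S ≠ Set.univ → ∃ i ∈ S, ∃ j ∉ S, M i j ≠ 0

/-- For the Persidskii-type system `ẋ = AΦ(x)` with `⌈A⌉_Mzr` Hurwitz and
irreducible, `w_A` a positive left Perron eigenvector of `⌈A⌉_Mzr`, and `φᵢ' ≥ d₁ > 0`,
the ℓ¹-`[w_A]` log norm of the Jacobian is at most `d₁ α(⌈A⌉_Mzr) < 0`. -/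
theorem persidskii_contraction {n : ℕ}
    (A : Matrix (Fin n) (Fin n) ℝ)
    (hHur : specAbs (mzr A) < 0) (hirr : MatIrreducible (mzr A))
    (w : Fin n → ℝ) (hw : ∀ i, 0 < w i)
    (hPerron : (mzr A)ᵀ.mulVec w = specAbs (mzr A) • w)
    (d₁ : ℝ) (hd₁ : 0 < d₁)
    (φ : Fin n → ℝ → ℝ) (hφ : ∀ i, Differentiable ℝ (φ i))
    (hslope : ∀ i s, d₁ ≤ deriv (φ i) s) :
    ∀ x : Fin n → ℝ,
      mu1 w (A * Matrix.diagonal (fun i => deriv (φ i) (x i))) ≤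
        d₁ * specAbs (mzr A) ∧ d₁ * specAbs (mzr A) < 0 := by
  intro x
  set α := specAbs (mzr A) with hαdef
  have hαneg : α < 0 := hHur
  have hprod : d₁ * α < 0 := mul_neg_of_pos_of_neg hd₁ hαneg
  refine ⟨?_, hprod⟩
  rcases Nat.eq_zero_or_pos n with hn | hn
  · exfalso
    subst hn
    have hempty : {r : ℝ | ∃ μ : ℂ, μ ∈ spectrum ℂ ((mzr A).map (algebraMap ℝ ℂ)) ∧ r = μ.re} = ∅ := by
      ext r
      simp only [Set.mem_setOf_eq, Set.mem_empty_iff_false, iff_false, not_exists]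
      intro μ hμ
      exact hμ.1 (isUnit_of_subsingleton _)
    have : α = 0 := by
      rw [hαdef]
      unfold specAbs
      rw [hempty, Real.sSup_empty]
    linarith
  · haveI : NeZero n := ⟨hn.ne'⟩
    set d : Fin n → ℝ := fun i => deriv (φ i) (x i) with hd
    have hdpos : ∀ i, 0 < d i := fun i => lt_of_lt_of_le hd₁ (hslope i (x i))
    -- key identity per column
    have key : ∀ i, (A * Matrix.diagonal d) i i
        + ∑ j ∈ univ.erase i, (w j / w i) * |(A * Matrix.diagonal d) j i| = d i * α := by
      intro i
      have hwi : w i ≠ 0 := (hw i).ne'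
      have hPi : ∑ j, mzr A j i * w j = α * w i := by
        have := congrFun hPerron i
        simpa [Matrix.mulVec, Matrix.transpose_apply, dotProduct, mul_comm] using this
      have hsplit : mzr A i i * w i + ∑ j ∈ univ.erase i, mzr A j i * w j = α * w i := by
        rw [Finset.add_sum_erase univ (fun j => mzr A j i * w j) (mem_univ i)]
        exact hPi
      have hbracket : A i i + ∑ j ∈ univ.erase i, (w j / w i) * |A j i| = α := by
        have h1 : (A i i + ∑ j ∈ univ.erase i, (w j / w i) * |A j i|) * w i = α * w i := by
          rw [add_mul, Finset.sum_mul]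
          have h2 : ∀ j ∈ univ.erase i, (w j / w i) * |A j i| * w i = |A j i| * w j := by
            intro j _
            field_simp
          rw [Finset.sum_congr rfl h2]
          have : mzr A i i = A i i := by simp [mzr]
          rw [this] at hsplit
          have h3 : ∀ j ∈ univ.erase i, mzr A j i * w j = |A j i| * w j := by
            intro j hj
            have : j ≠ i := Finset.ne_of_mem_erase hj
            simp [mzr, this]
          rw [Finset.sum_congr rfl h3] at hsplit
          exact hsplit
        exact mul_right_cancel₀ hwi h1
      have habs : ∀ j ∈ univ.erase i, (w j / w i) * |(A * Matrix.diagonal d) j i|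
          = ((w j / w i) * |A j i|) * d i := by
        intro j _
        rw [Matrix.mul_diagonal, abs_mul, abs_of_pos (hdpos i)]
        ring
      rw [Finset.sum_congr rfl habs, Matrix.mul_diagonal, ← Finset.sum_mul]
      calc A i i * d i + (∑ j ∈ univ.erase i, (w j / w i) * |A j i|) * d i
          = (A i i + ∑ j ∈ univ.erase i, (w j / w i) * |A j i|) * d i := by ring
        _ = α * d i := by rw [hbracket]
        _ = d i * α := mul_comm _ _
    -- conclude
    unfold mu1
    refine ciSup_le fun i => ?_
    rw [key i]
    exact mul_le_mul_of_nonpos_right (hslope i (x i)) hαneg.le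
end
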